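/- arXiv:1503.01022 — 11 statements merged into one kernel-verified Lean document; each statement's English description precedes it below -/
import Mathlib

section
/- For real numbers $2 \geq \alpha_1 \geq \alpha_2 \geq \alpha_3 > 1$, one has $\max\{2 + 2\alpha_3/\alpha_1 + 2\alpha_3/\alpha_2 - 2\alpha_3,\ 3 + 2\alpha_2/\alpha_1 + \alpha_2/\alpha_3 - 2\alpha_2\} \leq 4 + \alpha_1/\alpha_2 + \alpha_1/\alpha_3 - 2\alpha_1$. -/
/-! Both gaps factor: with `a ≥ b ≥ c` the differences are
`2 (a - c) (1/a + 1/c - 1) + (2c - a)(b - c)/(bc)` and `(a - b)(2/a + 1/b + 1/c - 2)`,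
and every factor is nonnegative because `1/x ≥ 1/2` for `0 < x ≤ 2` and `a ≤ 2 < 2c`. -/

section

variable {a b c : ℝ}

lemma rhs_sub_first_expr (ha : a ≠ 0) (hb : b ≠ 0) (hc : c ≠ 0) :
    (4 + a / b + a / c - 2 * a) - (2 + 2 * c / a + 2 * c / b - 2 * c) =
      2 * (a - c) * (a⁻¹ + c⁻¹ - 1) + (2 * c - a) * (b - c) / (b * c) := by
  field_simp
  ring

lemma rhs_sub_second_expr (ha : a ≠ 0) (hb : b ≠ 0) (hc : c ≠ 0) :
    (4 + a / b + a / c - 2 * a) - (3 + 2 * b / a + b / c - 2 * b) =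
      (a - b) * (2 * a⁻¹ + b⁻¹ + c⁻¹ - 2) := by
  field_simp
  ring

lemma first_expr_le_rhs (hc : 0 < c) (hcb : c ≤ b) (hca : c ≤ a) (ha : a ≤ 2)
    (hac : a ≤ 2 * c) :
    2 + 2 * c / a + 2 * c / b - 2 * c ≤ 4 + a / b + a / c - 2 * a := by
  have ha₀ : 0 < a := hc.trans_le hca
  have hb₀ : 0 < b := hc.trans_le hcb
  have hinv : 0 ≤ a⁻¹ + c⁻¹ - 1 := by
    linarith [inv_anti₀ ha₀ ha, inv_anti₀ hc (hca.trans ha)]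
  rw [← sub_nonneg, rhs_sub_first_expr ha₀.ne' hb₀.ne' hc.ne']
  have hfirst : 0 ≤ 2 * (a - c) * (a⁻¹ + c⁻¹ - 1) :=
    mul_nonneg (by linarith) hinv
  have hsecond : 0 ≤ (2 * c - a) * (b - c) / (b * c) :=
    div_nonneg (mul_nonneg (by linarith) (by linarith)) (by positivity)
  exact add_nonneg hfirst hsecond

lemma second_expr_le_rhs (hb : 0 < b) (hc : 0 < c) (hba : b ≤ a) (ha : a ≤ 2) (hc₂ : c ≤ 2) :
    3 + 2 * b / a + b / c - 2 * b ≤ 4 + a / b + a / c - 2 * a := by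
  have ha₀ : 0 < a := hb.trans_le hba
  have hinv : 0 ≤ 2 * a⁻¹ + b⁻¹ + c⁻¹ - 2 := by
    linarith [inv_anti₀ ha₀ ha, inv_anti₀ hb (hba.trans ha), inv_anti₀ hc hc₂]
  rw [← sub_nonneg, rhs_sub_second_expr ha₀.ne' hb.ne' hc.ne']
  exact mul_nonneg (sub_nonneg.2 hba) hinv

end

theorem stmt0 (α₁ α₂ α₃ : ℝ) (h1 : 2 ≥ α₁) (h2 : α₁ ≥ α₂) (h3 : α₂ ≥ α₃) (h4 : α₃ > 1) :
    max (2 + 2 * α₃ / α₁ + 2 * α₃ / α₂ - 2 * α₃)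
        (3 + 2 * α₂ / α₁ + α₂ / α₃ - 2 * α₂)
      ≤ 4 + α₁ / α₂ + α₁ / α₃ - 2 * α₁ := by
  have hα₃ : 0 < α₃ := by linarith
  refine max_le ?_ ?_
  · exact first_expr_le_rhs hα₃ h3 (h3.trans h2) h1 (by linarith)
  · exact second_expr_le_rhs (hα₃.trans_le h3) hα₃ h2 h1 (by linarith)
end

section
/- Let $0 < \alpha_2 \leq \alpha_1 \leq 2$ with $2 - 1/\alpha_1 - 1/\alpha_2 > 0$, and set $\gamma = 2 - 1/\alpha_1 - 1/\alpha_2$. Then the infimum of the set of $\beta \in (0,2)$ such that $\sum_{k=1}^{\infty}\sum_{n=1}^{\infty} \frac{1}{k^{\beta}+n^{\beta}} \left(\frac{1}{k^{\alpha_1}+n^{\alpha_2}}\right)^{\gamma} < \infty$ equals $\max\{3 + \alpha_1/\alpha_2 - 2\alpha_1,\ 2 + 2\alpha_2/\alpha_1 - 2\alpha_2\}$. -/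
/-!
For `θ, s ∈ [0, 1]`, weighted AM–GM gives `k^β + n^β ≥ k^(θβ) n^((1-θ)β)` and
`k^α₁ + n^α₂ ≥ k^(sα₁) n^((1-s)α₂)`, so the double series is dominated by a product of two
p-series and converges once both resulting exponents exceed `1`; a suitable choice of `θ, s`
achieves this whenever `β > max (2 - α₁γ) (1 + α₂/α₁ - α₂γ)`. Conversely, the row of index `k`
has about `k` terms `n ≤ k` of size `≍ k^(-β-α₁γ)`, and the column of index `n` has about
`n^(α₂/α₁)` terms `k ≤ n^(α₂/α₁)` of size `≍ n^(-β-α₂γ)`; summability of the row and column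
sums forces both strict inequalities. For `γ = 2 - 1/α₁ - 1/α₂` the two thresholds are the two
entries of the maximum in the theorem.
-/

open Set Real

noncomputable def summand (α₁ α₂ β γ x y : ℝ) : ℝ :=
  (x ^ β + y ^ β)⁻¹ * ((x ^ α₁ + y ^ α₂)⁻¹) ^ γ

lemma summand_pos {α₁ α₂ β γ x y : ℝ} (hx : 0 < x) (hy : 0 < y) :
    0 < summand α₁ α₂ β γ x y := by
  unfold summand; positivity

lemma summand_comm (α₁ α₂ β γ x y : ℝ) : summand α₁ α₂ β γ x y = summand α₂ α₁ β γ y x := by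
  simp only [summand, add_comm]

lemma summable_nat_add_one_rpow_iff {p : ℝ} :
    Summable (fun n : ℕ => ((n : ℝ) + 1) ^ p) ↔ p < -1 := by
  have h := summable_nat_add_iff 1 (f := fun n : ℕ => (n : ℝ) ^ p)
  push_cast at h
  rw [h, Real.summable_nat_rpow]

lemma rpow_mul_rpow_one_sub_le_add {x y θ : ℝ} (hx : 0 ≤ x) (hy : 0 ≤ y) (hθ₀ : 0 ≤ θ)
    (hθ₁ : θ ≤ 1) : x ^ θ * y ^ (1 - θ) ≤ x + y := by
  have := geom_mean_le_arith_mean2_weighted hθ₀ (sub_nonneg.2 hθ₁) hx hy (by ring)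
  nlinarith [mul_nonneg hθ₀ hx, mul_nonneg (sub_nonneg.2 hθ₁) hy]

lemma summand_le_rpow_mul_rpow {α₁ α₂ β γ θ s x y : ℝ} (hx : 0 < x) (hy : 0 < y)
    (hγ : 0 ≤ γ) (hθ₀ : 0 ≤ θ) (hθ₁ : θ ≤ 1) (hs₀ : 0 ≤ s) (hs₁ : s ≤ 1) :
    summand α₁ α₂ β γ x y ≤
      x ^ (-(θ * β + s * α₁ * γ)) * y ^ (-((1 - θ) * β + (1 - s) * α₂ * γ)) := by
  have hβ : (x ^ β) ^ θ * (y ^ β) ^ (1 - θ) ≤ x ^ β + y ^ β :=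
    rpow_mul_rpow_one_sub_le_add (by positivity) (by positivity) hθ₀ hθ₁
  have hα : (x ^ α₁) ^ s * (y ^ α₂) ^ (1 - s) ≤ x ^ α₁ + y ^ α₂ :=
    rpow_mul_rpow_one_sub_le_add (by positivity) (by positivity) hs₀ hs₁
  calc summand α₁ α₂ β γ x y
      ≤ ((x ^ β) ^ θ * (y ^ β) ^ (1 - θ))⁻¹ *
          (((x ^ α₁) ^ s * (y ^ α₂) ^ (1 - s))⁻¹) ^ γ := by
        unfold summand; gcongr
    _ = _ := by
        simp only [← rpow_mul hx.le, ← rpow_mul hy.le, mul_inv, ← rpow_neg hx.le,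
          ← rpow_neg hy.le]
        rw [mul_rpow (by positivity) (by positivity), ← rpow_mul hx.le, ← rpow_mul hy.le]
        rw [mul_mul_mul_comm, ← rpow_add hx, ← rpow_add hy]
        ring_nf

lemma rpow_mul_rpow_le_summand {α₁ α₂ β γ x y : ℝ} (hx : 0 < x) (hy : 0 < y) (hγ : 0 ≤ γ)
    (hβ : y ^ β ≤ x ^ β) (hα : y ^ α₂ ≤ x ^ α₁) :
    (2 : ℝ) ^ (-(1 + γ)) * x ^ (-(β + α₁ * γ)) ≤ summand α₁ α₂ β γ x y := by
  calc (2 : ℝ) ^ (-(1 + γ)) * x ^ (-(β + α₁ * γ))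
      = (2 * x ^ β)⁻¹ * ((2 * x ^ α₁)⁻¹) ^ γ := by
        rw [inv_rpow (by positivity), mul_rpow (by positivity) (by positivity), ← rpow_mul hx.le,
          neg_add, neg_add, rpow_add two_pos, rpow_add hx, rpow_neg_one, rpow_neg two_pos.le,
          rpow_neg hx.le, rpow_neg hx.le, mul_inv, mul_inv]
        ring
    _ ≤ summand α₁ α₂ β γ x y := by
        unfold summand; gcongr <;> linarith

lemma add_lt_neg_one_of_summable {f : ℕ × ℕ → ℝ} (hf₀ : 0 ≤ f) (hf : Summable f)
    {c t p : ℝ} (hc : 0 < c) (ht : 0 ≤ t)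
    (hle : ∀ k n : ℕ, (n : ℝ) + 1 ≤ ((k : ℝ) + 1) ^ t → c * ((k : ℝ) + 1) ^ p ≤ f (k, n)) :
    t + p < -1 := by
  obtain ⟨hrow, hrows⟩ := (summable_prod_of_nonneg hf₀).1 hf
  rw [← summable_nat_add_one_rpow_iff]
  refine (hrows.mul_left (2 / c)).of_nonneg_of_le (fun _ => by positivity) fun k => ?_
  set x : ℝ := k + 1
  set N := ⌊x ^ t⌋₊
  have hxt : 1 ≤ x ^ t := one_le_rpow (by simp [x]) ht
  have hN : x ^ t ≤ 2 * N := by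
    have h1 : 1 ≤ N := Nat.one_le_floor_iff _ |>.2 hxt
    have h2 := Nat.lt_floor_add_one (x ^ t)
    have h3 : (1 : ℝ) ≤ N := by exact_mod_cast h1
    linarith
  calc x ^ (t + p) = x ^ t * x ^ p := rpow_add (by positivity) _ _
    _ ≤ 2 * N * x ^ p := by gcongr
    _ = 2 / c * (N * (c * x ^ p)) := by field_simp
    _ = 2 / c * ∑ n ∈ Finset.range N, c * x ^ p := by simp
    _ ≤ 2 / c * ∑ n ∈ Finset.range N, f (k, n) := by
        gcongr with n hn
        apply hle
        have : (n : ℝ) + 1 ≤ N := by exact_mod_cast Finset.mem_range.1 hn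
        exact this.trans (Nat.floor_le (by positivity))
    _ ≤ 2 / c * ∑' n, f (k, n) := by
        gcongr
        exact (hrow k).sum_le_tsum _ fun n _ => hf₀ _

lemma two_sub_lt_of_summable {α₁ α₂ β γ : ℝ} (hα₂ : 0 ≤ α₂) (hα : α₂ ≤ α₁) (hβ : 0 ≤ β)
    (hγ : 0 ≤ γ) (h : Summable fun p : ℕ × ℕ => summand α₁ α₂ β γ (p.1 + 1) (p.2 + 1)) :
    2 - α₁ * γ < β := by
  have key := add_lt_neg_one_of_summable (f := fun p => summand α₁ α₂ β γ (p.1 + 1) (p.2 + 1))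
    (fun p => (summand_pos (by positivity) (by positivity)).le) h
    (by positivity : (0 : ℝ) < 2 ^ (-(1 + γ))) zero_le_one fun k n hnk => by
      have hx : (1 : ℝ) ≤ k + 1 := by simp
      rw [rpow_one] at hnk
      refine rpow_mul_rpow_le_summand (by positivity) (by positivity) hγ
        (rpow_le_rpow (by positivity) hnk hβ) ?_
      exact (rpow_le_rpow (by positivity) hnk hα₂).trans (rpow_le_rpow_of_exponent_le hx hα)
  linarith

lemma one_add_div_sub_lt_of_summable {α₁ α₂ β γ : ℝ} (hα₂ : 0 ≤ α₂) (hα : α₂ ≤ α₁)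
    (hα₁ : 0 < α₁) (hβ : 0 ≤ β) (hγ : 0 ≤ γ)
    (h : Summable fun p : ℕ × ℕ => summand α₁ α₂ β γ (p.1 + 1) (p.2 + 1)) :
    1 + α₂ / α₁ - α₂ * γ < β := by
  have hswap : Summable fun p : ℕ × ℕ => summand α₁ α₂ β γ (p.2 + 1) (p.1 + 1) :=
    (h.comp_injective Prod.swap_injective :)
  have key := add_lt_neg_one_of_summable (f := fun p => summand α₁ α₂ β γ (p.2 + 1) (p.1 + 1))
    (fun p => (summand_pos (by positivity) (by positivity)).le) hswap
    (by positivity : (0 : ℝ) < 2 ^ (-(1 + γ))) (div_nonneg hα₂ hα₁.le) fun k n hnk => by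
      have hx : (1 : ℝ) ≤ k + 1 := by simp
      have hnx : (n : ℝ) + 1 ≤ k + 1 :=
        hnk.trans (rpow_le_self_of_one_le hx ((div_le_one hα₁).2 hα))
      rw [summand_comm]
      refine rpow_mul_rpow_le_summand (by positivity) (by positivity) hγ
        (rpow_le_rpow (by positivity) hnx hβ) ?_
      calc ((n : ℝ) + 1) ^ α₁ ≤ (((k : ℝ) + 1) ^ (α₂ / α₁)) ^ α₁ :=
            rpow_le_rpow (by positivity) hnk hα₁.le
        _ = ((k : ℝ) + 1) ^ α₂ := by rw [← rpow_mul (by positivity), div_mul_cancel₀ _ hα₁.ne']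
  linarith

lemma summable_summand_of_exponents {α₁ α₂ β γ θ s : ℝ} (hγ : 0 ≤ γ) (hθ₀ : 0 ≤ θ)
    (hθ₁ : θ ≤ 1) (hs₀ : 0 ≤ s) (hs₁ : s ≤ 1) (h₁ : 1 < θ * β + s * α₁ * γ)
    (h₂ : 1 < (1 - θ) * β + (1 - s) * α₂ * γ) :
    Summable fun p : ℕ × ℕ => summand α₁ α₂ β γ (p.1 + 1) (p.2 + 1) := by
  have hk := summable_nat_add_one_rpow_iff.2 (neg_lt_neg h₁)
  have hn := summable_nat_add_one_rpow_iff.2 (neg_lt_neg h₂)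
  refine (hk.mul_of_nonneg hn (fun _ => by positivity) fun _ => by positivity).of_nonneg_of_le
    (fun p => (summand_pos (by positivity) (by positivity)).le) fun p => ?_
  exact summand_le_rpow_mul_rpow (by positivity) (by positivity) hγ hθ₀ hθ₁ hs₀ hs₁

lemma summable_summand_of_lt {α₁ α₂ β γ : ℝ} (hα₁ : 0 ≤ α₁) (hβ : 0 < β) (hγ : 0 ≤ γ)
    (hA : 2 - α₁ * γ < β) (hB : 1 + α₂ / α₁ - α₂ * γ < β) :
    Summable fun p : ℕ × ℕ => summand α₁ α₂ β γ (p.1 + 1) (p.2 + 1) := by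
  have hθ : ∀ u, 0 ≤ u → u ≤ β → ∃ θ, 0 ≤ θ ∧ θ ≤ 1 ∧ θ * β = u := fun u hu₀ hu₁ =>
    ⟨u / β, div_nonneg hu₀ hβ.le, (div_le_one hβ).2 hu₁, div_mul_cancel₀ u hβ.ne'⟩
  have hαγ : 0 ≤ α₁ * γ := mul_nonneg hα₁ hγ
  -- If `α₁γ ≤ 1`, all of the `γ`-weight goes to `k` and `θ` balances the two exponents;
  -- otherwise `s = (α₁γ)⁻¹` puts just enough `γ`-weight on `k` to push its exponent past `1`.
  rcases le_or_gt (α₁ * γ) 1 with hsmall | hlarge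
  · obtain ⟨θ, hθ₀, hθ₁, hθβ⟩ := hθ ((β - α₁ * γ) / 2) (by linarith) (by linarith)
    refine summable_summand_of_exponents hγ hθ₀ hθ₁ zero_le_one le_rfl ?_ ?_ <;>
      nlinarith
  · set B := 1 + α₂ / α₁ - α₂ * γ with hBdef
    have hm₀ : 0 < min β (β - B) := lt_min hβ (sub_pos.2 hB)
    obtain ⟨θ, hθ₀, hθ₁, hθβ⟩ :=
      hθ (min β (β - B) / 2) (by positivity) (by linarith [min_le_left β (β - B)])
    have hs : (α₁ * γ)⁻¹ * α₁ * γ = 1 := by rw [mul_assoc, inv_mul_cancel₀ (by positivity)]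
    have hs' : (1 - (α₁ * γ)⁻¹) * α₂ * γ = α₂ * γ - α₂ / α₁ := by
      have : α₁ ≠ 0 := by rintro rfl; simp at hlarge; linarith
      have : γ ≠ 0 := by rintro rfl; simp at hlarge; linarith
      field_simp
    refine summable_summand_of_exponents hγ hθ₀ hθ₁ (by positivity)
      (inv_le_one_of_one_le₀ hlarge.le) ?_ ?_
    · rw [hs, hθβ]; linarith
    · rw [hs', sub_mul, one_mul, hθβ]; linarith [min_le_right β (β - B)]

theorem summable_summand_iff {α₁ α₂ β γ : ℝ} (hα₂ : 0 < α₂) (hα : α₂ ≤ α₁) (hβ : 0 < β)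
    (hγ : 0 ≤ γ) :
    (Summable fun p : ℕ × ℕ => summand α₁ α₂ β γ (p.1 + 1) (p.2 + 1)) ↔
      2 - α₁ * γ < β ∧ 1 + α₂ / α₁ - α₂ * γ < β :=
  ⟨fun h => ⟨two_sub_lt_of_summable hα₂.le hα hβ.le hγ h,
      one_add_div_sub_lt_of_summable hα₂.le hα (hα₂.trans_le hα) hβ.le hγ h⟩,
    fun h => summable_summand_of_lt (hα₂.trans_le hα).le hβ hγ h.1 h.2⟩

lemma setOf_summable_summand_eq_Ioo {α₁ α₂ γ b : ℝ} (hα₂ : 0 < α₂) (hα : α₂ ≤ α₁) (hγ : 0 ≤ γ)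
    (h₀ : 0 ≤ max (2 - α₁ * γ) (1 + α₂ / α₁ - α₂ * γ)) :
    {β : ℝ | β ∈ Ioo 0 b ∧ Summable fun p : ℕ × ℕ => summand α₁ α₂ β γ (p.1 + 1) (p.2 + 1)} =
      Ioo (max (2 - α₁ * γ) (1 + α₂ / α₁ - α₂ * γ)) b := by
  ext β
  simp only [mem_ofPred_eq, mem_Ioo]
  constructor
  · rintro ⟨⟨hβ, hβb⟩, h⟩
    exact ⟨max_lt_iff.2 ((summable_summand_iff hα₂ hα hβ hγ).1 h), hβb⟩
  · rintro ⟨h, hβb⟩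
    have hβ : 0 < β := h₀.trans_lt h
    exact ⟨⟨hβ, hβb⟩, (summable_summand_iff hα₂ hα hβ hγ).2 (max_lt_iff.1 h)⟩

theorem stmt1 (α₁ α₂ : ℝ) (h2 : 0 < α₂) (h21 : α₂ ≤ α₁) (h12 : α₁ ≤ 2)
    (hγ : 0 < 2 - 1 / α₁ - 1 / α₂) :
    sInf {β : ℝ | β ∈ Ioo (0 : ℝ) 2 ∧
        Summable (fun p : ℕ × ℕ =>
          (((p.1 : ℝ) + 1) ^ β + ((p.2 : ℝ) + 1) ^ β)⁻¹ *
            ((((p.1 : ℝ) + 1) ^ α₁ + ((p.2 : ℝ) + 1) ^ α₂)⁻¹) ^ (2 - 1 / α₁ - 1 / α₂))}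
      = max (3 + α₁ / α₂ - 2 * α₁) (2 + 2 * α₂ / α₁ - 2 * α₂) := by
  have h1 : 0 < α₁ := h2.trans_le h21
  have h11 : 1 < α₁ := by
    have : 1 / α₁ ≤ 1 / α₂ := one_div_le_one_div_of_le h2 h21
    have : 1 / α₁ < 1 := by linarith
    rwa [div_lt_one h1] at this
  set γ := 2 - 1 / α₁ - 1 / α₂ with hγdef
  have hA : 2 - α₁ * γ = 3 + α₁ / α₂ - 2 * α₁ := by rw [hγdef]; field_simp; ring
  have hB : 1 + α₂ / α₁ - α₂ * γ = 2 + 2 * α₂ / α₁ - 2 * α₂ := by rw [hγdef]; field_simp; ring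
  have hB₀ : 0 ≤ 2 + 2 * α₂ / α₁ - 2 * α₂ := by
    have : α₂ ≤ 2 * α₂ / α₁ := by rw [le_div_iff₀ h1]; nlinarith
    linarith
  have hB₂ : 2 + 2 * α₂ / α₁ - 2 * α₂ < 2 := by
    have : 2 * α₂ / α₁ < 2 * α₂ := by rw [div_lt_iff₀ h1]; nlinarith
    linarith
  have hA₂ : 3 + α₁ / α₂ - 2 * α₁ < 2 := by rw [← hA]; nlinarith [mul_pos h1 hγ]
  have hset := setOf_summable_summand_eq_Ioo (b := 2) h2 h21 hγ.le
    (by rw [hA, hB]; exact le_max_of_le_right hB₀)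
  rw [hA, hB] at hset
  exact hset ▸ csInf_Ioo (max_lt hA₂ hB₂)
end

section
/- Let $0 < \alpha_3 \leq \alpha_2 \leq \alpha_1 \leq 2$ with $\gamma := 2 - 1/\alpha_1 - 1/\alpha_2 - 1/\alpha_3 > 0$. Then the infimum of the set of $\beta \in (0,3)$ such that $\sum_{k,n,m \geq 1} \frac{(k^{\alpha_1} + n^{\alpha_2} + m^{\alpha_3})^{-\gamma}}{k^{\beta} + n^{\beta} + m^{\beta}} < \infty$ equals $4 + \alpha_1/\alpha_2 + \alpha_1/\alpha_3 - 2\alpha_1$. -/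
/-!
Write `γ = 2 - 1/α₁ - 1/α₂ - 1/α₃`; since `0 < α₁ γ ≤ 1`, it suffices to show that the series
converges exactly for `β > 3 - α₁ γ`, which makes the set in question the interval
`(3 - α₁ γ, 3)`.

Convergence: by weighted AM–GM the numerator base is at least `k^(α₁θ) n^(α₂θ') m^(α₃θ')` with
`θ + 2θ' = 1`, and the denominator at least `k^(β-2) n m`. The summand is then dominated by a
product of three one-variable `p`-series, all convergent once `θ` is close enough to `1`.

Divergence: on the slice `k = i`, each of the `(i+1)²` terms with `n, m ≤ i` is at least a constant
times `(i+1)^(-(α₁γ + β)) ≥ (i+1)^(-3)`, so the slice sums dominate the harmonic series.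
-/

open Set Real

lemma rpow_mul_weights_le_add {K N M a b c w₁ w₂ w₃ : ℝ} (hK : 0 ≤ K) (hN : 0 ≤ N) (hM : 0 ≤ M)
    (hw₁ : 0 ≤ w₁) (hw₂ : 0 ≤ w₂) (hw₃ : 0 ≤ w₃) (hw : w₁ + w₂ + w₃ = 1) :
    K ^ (a * w₁) * N ^ (b * w₂) * M ^ (c * w₃) ≤ K ^ a + N ^ b + M ^ c := by
  have hA : 0 ≤ K ^ a := rpow_nonneg hK a
  have hB : 0 ≤ N ^ b := rpow_nonneg hN b
  have hC : 0 ≤ M ^ c := rpow_nonneg hM c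
  calc K ^ (a * w₁) * N ^ (b * w₂) * M ^ (c * w₃) = (K ^ a) ^ w₁ * (N ^ b) ^ w₂ * (M ^ c) ^ w₃ := by
        rw [← rpow_mul hK, ← rpow_mul hN, ← rpow_mul hM]
    _ ≤ w₁ * K ^ a + w₂ * N ^ b + w₃ * M ^ c :=
        geom_mean_le_arith_mean3_weighted hw₁ hw₂ hw₃ hA hB hC hw
    _ ≤ K ^ a + N ^ b + M ^ c := by
        nlinarith [mul_nonneg (by linarith : 0 ≤ 1 - w₁) hA,
          mul_nonneg (by linarith : 0 ≤ 1 - w₂) hB, mul_nonneg (by linarith : 0 ≤ 1 - w₃) hC]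

lemma rpow_neg_div_add_rpow_le {K N M a b c β γ θ₁ θ₂ θ₃ w₁ w₂ w₃ : ℝ}
    (hK : 0 < K) (hN : 0 < N) (hM : 0 < M) (hγ : 0 ≤ γ)
    (hθ₁ : 0 ≤ θ₁) (hθ₂ : 0 ≤ θ₂) (hθ₃ : 0 ≤ θ₃) (hθ : θ₁ + θ₂ + θ₃ = 1)
    (hw₁ : 0 ≤ w₁) (hw₂ : 0 ≤ w₂) (hw₃ : 0 ≤ w₃) (hw : w₁ + w₂ + w₃ = 1) :
    (K ^ a + N ^ b + M ^ c) ^ (-γ) / (K ^ β + N ^ β + M ^ β) ≤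
      K ^ (-(a * θ₁ * γ + β * w₁)) *
        (N ^ (-(b * θ₂ * γ + β * w₂)) * M ^ (-(c * θ₃ * γ + β * w₃))) := by
  have split : ∀ {X : ℝ}, 0 < X → ∀ u v : ℝ, X ^ (-(u * γ + v)) = (X ^ u) ^ (-γ) / X ^ v :=
    fun hX u v => by rw [← rpow_mul hX.le, ← rpow_sub hX]; ring_nf
  calc (K ^ a + N ^ b + M ^ c) ^ (-γ) / (K ^ β + N ^ β + M ^ β)
      ≤ (K ^ (a * θ₁) * N ^ (b * θ₂) * M ^ (c * θ₃)) ^ (-γ) /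
          (K ^ (β * w₁) * N ^ (β * w₂) * M ^ (β * w₃)) :=
        div_le_div₀ (by positivity)
          (rpow_le_rpow_of_nonpos (by positivity)
            (rpow_mul_weights_le_add hK.le hN.le hM.le hθ₁ hθ₂ hθ₃ hθ) (by linarith))
          (by positivity) (rpow_mul_weights_le_add hK.le hN.le hM.le hw₁ hw₂ hw₃ hw)
    _ = _ := by
        rw [split hK, split hN, split hM, mul_rpow (by positivity) (by positivity),
          mul_rpow (by positivity) (by positivity)]
        ring

lemma summable_nat_add_one_rpow_neg_iff {q : ℝ} :
    Summable (fun n : ℕ => ((n : ℝ) + 1) ^ (-q)) ↔ 1 < q := by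
  rw [← Real.summable_one_div_nat_add_rpow 1 q]
  refine summable_congr fun n => ?_
  rw [abs_of_pos (by positivity), rpow_neg (by positivity), one_div]

lemma summable_nat_add_one_rpow_neg_mul {q₁ q₂ q₃ : ℝ} (hq₁ : 1 < q₁) (hq₂ : 1 < q₂)
    (hq₃ : 1 < q₃) :
    Summable (fun p : ℕ × ℕ × ℕ => ((p.1 : ℝ) + 1) ^ (-q₁) *
      (((p.2.1 : ℝ) + 1) ^ (-q₂) * ((p.2.2 : ℝ) + 1) ^ (-q₃))) :=
  (summable_nat_add_one_rpow_neg_iff.mpr hq₁).mul_of_nonneg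
    ((summable_nat_add_one_rpow_neg_iff.mpr hq₂).mul_of_nonneg
      (summable_nat_add_one_rpow_neg_iff.mpr hq₃) (fun _ => by positivity) fun _ => by positivity)
    (fun _ => by positivity) fun _ => by positivity

noncomputable def tripleSummand (α₁ α₂ α₃ γ β : ℝ) (p : ℕ × ℕ × ℕ) : ℝ :=
  (((p.1 : ℝ) + 1) ^ α₁ + ((p.2.1 : ℝ) + 1) ^ α₂ + ((p.2.2 : ℝ) + 1) ^ α₃) ^ (-γ) /
    (((p.1 : ℝ) + 1) ^ β + ((p.2.1 : ℝ) + 1) ^ β + ((p.2.2 : ℝ) + 1) ^ β)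

lemma summable_tripleSummand {α₁ α₂ α₃ γ β : ℝ} (hα₁ : 0 < α₁) (hα₂ : 0 < α₂) (hα₃ : 0 < α₃)
    (hγ : 0 < γ) (hβ : 2 ≤ β) (hβγ : 3 - α₁ * γ < β) :
    Summable (tripleSummand α₁ α₂ α₃ γ β) := by
  obtain ⟨θ, hθ, hθ1⟩ :=
    exists_between (max_lt ((div_lt_one (by positivity)).mpr (by linarith)) one_pos :
      max ((3 - β) / (α₁ * γ)) 0 < 1)
  rw [max_lt_iff, div_lt_iff₀ (by positivity)] at hθ
  have hβ0 : β ≠ 0 := by positivity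
  refine .of_nonneg_of_le (fun _ => by unfold tripleSummand; positivity)
    (fun p => rpow_neg_div_add_rpow_le (θ₂ := (1 - θ) / 2) (θ₃ := (1 - θ) / 2)
      (w₁ := (β - 2) / β) (w₂ := 1 / β) (w₃ := 1 / β) (by positivity) (by positivity)
      (by positivity) hγ.le hθ.2.le (by linarith) (by linarith) (by ring)
      (div_nonneg (by linarith) (by linarith)) (by positivity) (by positivity)
      (by field_simp; ring))
    (summable_nat_add_one_rpow_neg_mul ?_ ?_ ?_)
  · rw [mul_div_cancel₀ _ hβ0]; nlinarith
  · rw [mul_one_div_cancel hβ0]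
    have : 0 < α₂ * ((1 - θ) / 2) * γ := by have := sub_pos.mpr hθ1; positivity
    linarith
  · rw [mul_one_div_cancel hβ0]
    have : 0 < α₃ * ((1 - θ) / 2) * γ := by have := sub_pos.mpr hθ1; positivity
    linarith

lemma rpow_neg_mul_le_rpow_neg_div_add_rpow {I N M α₁ α₂ α₃ β γ : ℝ} (hI : 1 ≤ I)
    (hN : 0 ≤ N) (hNI : N ≤ I) (hM : 0 ≤ M) (hMI : M ≤ I) (hα₂ : 0 ≤ α₂) (hα₃ : 0 ≤ α₃)
    (h21 : α₂ ≤ α₁) (h31 : α₃ ≤ α₁) (hγ : 0 ≤ γ) (hβ : 0 ≤ β) :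
    3 ^ (-γ) / 3 * I ^ (-(α₁ * γ + β)) ≤
      (I ^ α₁ + N ^ α₂ + M ^ α₃) ^ (-γ) / (I ^ β + N ^ β + M ^ β) := by
  have hI0 : 0 < I := by linarith
  have hnum : I ^ α₁ + N ^ α₂ + M ^ α₃ ≤ 3 * I ^ α₁ := by
    have := (rpow_le_rpow hN hNI hα₂).trans (rpow_le_rpow_of_exponent_le hI h21)
    have := (rpow_le_rpow hM hMI hα₃).trans (rpow_le_rpow_of_exponent_le hI h31)
    linarith
  have hden : I ^ β + N ^ β + M ^ β ≤ 3 * I ^ β := by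
    linarith [rpow_le_rpow hN hNI hβ, rpow_le_rpow hM hMI hβ]
  calc 3 ^ (-γ) / 3 * I ^ (-(α₁ * γ + β)) = (3 * I ^ α₁) ^ (-γ) / (3 * I ^ β) := by
        rw [mul_rpow (by norm_num) (by positivity), ← rpow_mul hI0.le, neg_add, rpow_add hI0,
          rpow_neg hI0.le β]
        field_simp
    _ ≤ _ := div_le_div₀ (by positivity) (rpow_le_rpow_of_nonpos (by positivity) hnum
          (by linarith)) (by positivity) hden

lemma not_summable_tripleSummand {α₁ α₂ α₃ γ β : ℝ} (hα₃ : 0 ≤ α₃) (h32 : α₃ ≤ α₂)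
    (h21 : α₂ ≤ α₁) (hγ : 0 ≤ γ) (hβ : 0 ≤ β) (hβγ : α₁ * γ + β ≤ 3) :
    ¬ Summable (tripleSummand α₁ α₂ α₃ γ β) := by
  intro hs
  set c : ℝ := 3 ^ (-γ) / 3
  have hslice : ∀ i : ℕ,
      c * ((i : ℝ) + 1) ^ (-1 : ℝ) ≤ ∑' b, tripleSummand α₁ α₂ α₃ γ β (i, b) := by
    intro i
    have hI : (1 : ℝ) ≤ i + 1 := by simp
    have hterm : ∀ b ∈ Finset.range (i + 1) ×ˢ Finset.range (i + 1),
        c * ((i : ℝ) + 1) ^ (-3 : ℝ) ≤ tripleSummand α₁ α₂ α₃ γ β (i, b) := by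
      rintro ⟨n, m⟩ hb
      simp only [Finset.mem_product, Finset.mem_range, Nat.lt_succ_iff] at hb
      refine le_trans ?_ (rpow_neg_mul_le_rpow_neg_div_add_rpow hI (by positivity)
        (by exact_mod_cast Nat.add_le_add_right hb.1 1) (by positivity)
        (by exact_mod_cast Nat.add_le_add_right hb.2 1) (hα₃.trans h32) hα₃ h21
        (h32.trans h21) hγ hβ)
      gcongr
    calc c * ((i : ℝ) + 1) ^ (-1 : ℝ)
        = ((i + 1) * (i + 1) : ℕ) • (c * ((i : ℝ) + 1) ^ (-3 : ℝ)) := by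
          rw [nsmul_eq_mul, show (-1 : ℝ) = 2 + -3 by norm_num, rpow_add (by positivity)]
          push_cast
          norm_num
          ring
      _ ≤ ∑ b ∈ Finset.range (i + 1) ×ˢ Finset.range (i + 1),
            tripleSummand α₁ α₂ α₃ γ β (i, b) := by
          simpa using Finset.card_nsmul_le_sum _ _ _ hterm
      _ ≤ _ := (hs.prod_factor i).sum_le_tsum _
          (fun _ _ => by unfold tripleSummand; positivity)
  have hharm : Summable fun i : ℕ => c * ((i : ℝ) + 1) ^ (-1 : ℝ) :=
    .of_nonneg_of_le (fun _ => by positivity) hslice hs.prod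
  rw [summable_mul_left_iff (by positivity)] at hharm
  exact lt_irrefl _ (summable_nat_add_one_rpow_neg_iff.mp hharm)

lemma summable_tripleSummand_iff {α₁ α₂ α₃ γ β : ℝ} (hα₃ : 0 < α₃) (h32 : α₃ ≤ α₂)
    (h21 : α₂ ≤ α₁) (hγ : 0 < γ) (hγ1 : α₁ * γ ≤ 1) (hβ : 0 ≤ β) :
    Summable (tripleSummand α₁ α₂ α₃ γ β) ↔ 3 - α₁ * γ < β := by
  refine ⟨fun hs => ?_, fun hβγ => ?_⟩
  · by_contra! hβγ
    exact not_summable_tripleSummand hα₃.le h32 h21 hγ.le hβ (by linarith) hs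
  · have hα₂ := hα₃.trans_le h32
    exact summable_tripleSummand (hα₂.trans_le h21) hα₂ hα₃ hγ (by linarith) hβγ

lemma mul_two_sub_inv_add_inv_add_inv_le_one {α₁ α₂ α₃ : ℝ} (hα₃ : 0 < α₃) (h32 : α₃ ≤ α₂)
    (h21 : α₂ ≤ α₁) (h12 : α₁ ≤ 2) : α₁ * (2 - 1 / α₁ - 1 / α₂ - 1 / α₃) ≤ 1 := by
  have hα₂ := hα₃.trans_le h32
  have : α₁ * (2 - 1 / α₁ - 1 / α₂ - 1 / α₃) = 2 * α₁ - 1 - α₁ / α₂ - α₁ / α₃ := by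
    field_simp [(hα₂.trans_le h21).ne']
  rw [this]
  linarith [(one_le_div hα₂).mpr h21, (one_le_div hα₃).mpr (h32.trans h21)]

theorem stmt2 (α₁ α₂ α₃ : ℝ) (h3 : 0 < α₃) (h32 : α₃ ≤ α₂) (h21 : α₂ ≤ α₁) (h12 : α₁ ≤ 2)
    (hγ : 0 < 2 - 1 / α₁ - 1 / α₂ - 1 / α₃) :
    sInf {β : ℝ | β ∈ Ioo (0 : ℝ) 3 ∧
        Summable (fun p : ℕ × ℕ × ℕ =>
          (((p.1 : ℝ) + 1) ^ α₁ + ((p.2.1 : ℝ) + 1) ^ α₂ + ((p.2.2 : ℝ) + 1) ^ α₃)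
              ^ (-(2 - 1 / α₁ - 1 / α₂ - 1 / α₃)) /
            (((p.1 : ℝ) + 1) ^ β + ((p.2.1 : ℝ) + 1) ^ β + ((p.2.2 : ℝ) + 1) ^ β))}
      = 4 + α₁ / α₂ + α₁ / α₃ - 2 * α₁ := by
  set γ := 2 - 1 / α₁ - 1 / α₂ - 1 / α₃
  have hα₁ : 0 < α₁ := h3.trans_le (h32.trans h21)
  have hγ1 : α₁ * γ ≤ 1 := mul_two_sub_inv_add_inv_add_inv_le_one h3 h32 h21 h12
  have hset : {β : ℝ | β ∈ Ioo (0 : ℝ) 3 ∧ Summable (tripleSummand α₁ α₂ α₃ γ β)} =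
      Ioo (3 - α₁ * γ) 3 := by
    ext β
    constructor
    · rintro ⟨⟨hβ, hβ3⟩, hs⟩
      exact ⟨(summable_tripleSummand_iff h3 h32 h21 hγ hγ1 hβ.le).mp hs, hβ3⟩
    · rintro ⟨hβγ, hβ3⟩
      have hβ : 0 < β := by linarith
      exact ⟨⟨hβ, hβ3⟩, (summable_tripleSummand_iff h3 h32 h21 hγ hγ1 hβ.le).mpr hβγ⟩
  change sInf {β : ℝ | β ∈ Ioo (0 : ℝ) 3 ∧ Summable (tripleSummand α₁ α₂ α₃ γ β)} = _
  rw [hset, csInf_Ioo (sub_lt_self 3 (mul_pos hα₁ hγ))]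
  simp only [γ]
  field_simp [(h3.trans_le h32).ne']
  ring
end

section
/- The improper integral $\int_1^{\infty}\int_1^{\infty} \left(x + y\ln\sqrt{x^2+y^2}\right)^{-2}\, dy\, dx$ diverges (is infinite). -/
/-!
For large `x` and `1 ≤ y ≤ x / (2 log x)` we have `log √(x² + y²) ≤ 2 log x`, so the denominator
is at most `2x`; this `y`-range has length at least `x / (4 log x)`, hence the inner integral is
at least `1 / (16 x log x)`. The outer integral then diverges like `log (log x)`.
-/

open Set MeasureTheory Real Filter Asymptotics

theorem not_integrableOn_Ici_inv_div_log (a : ℝ) :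
    ¬ IntegrableOn (fun x : ℝ ↦ x⁻¹ / log x) (Ici a) := by
  have hderiv : ∀ᶠ x in atTop, HasDerivAt (fun x ↦ log (log x)) (x⁻¹ / log x) x := by
    filter_upwards [eventually_gt_atTop 1] with x hx
    exact hasDerivAt_log_log (by positivity) hx.ne' (by linarith)
  exact not_integrableOn_of_tendsto_norm_atTop_of_deriv_isBigO_filter atTop (Ici_mem_atTop a)
    (hderiv.mono fun x hx ↦ hx.differentiableAt)
    (tendsto_norm_atTop_atTop.comp (tendsto_log_atTop.comp tendsto_log_atTop))
    (EventuallyEq.isBigO (hderiv.mono fun x hx ↦ hx.deriv))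

theorem lintegral_Ici_inv_div_log_eq_top {a : ℝ} (ha : 1 ≤ a) :
    ∫⁻ x in Ici a, ENNReal.ofReal (x⁻¹ / log x) = ⊤ := by
  by_contra h
  refine not_integrableOn_Ici_inv_div_log a
    ((lintegral_ofReal_ne_top_iff_integrable ?_ ?_).1 h)
  · exact (by fun_prop : Measurable fun x : ℝ ↦ x⁻¹ / log x).aestronglyMeasurable
  · filter_upwards [ae_restrict_mem measurableSet_Ici] with x hx
    exact div_nonneg (inv_nonneg.2 (by linarith [ha.trans hx])) (log_nonneg (ha.trans hx))

theorem log_sqrt_sq_add_sq_le {x y : ℝ} (hx : 2 ≤ x) (hy : 0 ≤ y) (hyx : y ≤ x) :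
    log √(x ^ 2 + y ^ 2) ≤ 2 * log x := by
  have hx2 : 4 ≤ x ^ 2 := by nlinarith
  have hsqrt : √(x ^ 2 + y ^ 2) ≤ x ^ 2 :=
    sqrt_le_iff.2 ⟨by positivity, by nlinarith [mul_self_le_mul_self hy hyx]⟩
  calc log √(x ^ 2 + y ^ 2) ≤ log (x ^ 2) := log_le_log (by positivity) hsqrt
    _ = 2 * log x := by rw [log_pow]; norm_num

theorem add_mul_log_sqrt_le {x y : ℝ} (hx : 2 ≤ x) (hy : 0 ≤ y) (hyx : 2 * y * log x ≤ x) :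
    x + y * log √(x ^ 2 + y ^ 2) ≤ 2 * x := by
  have hlog : 1 ≤ 2 * log x := by
    have := log_le_log (by norm_num) hx
    linarith [log_two_gt_d9]
  have hle := log_sqrt_sq_add_sq_le hx hy (by nlinarith)
  nlinarith [mul_le_mul_of_nonneg_left hle hy]

theorem inv_div_log_le_lintegral {x : ℝ} (hx : 2 ≤ x) (hlog : 4 * log x ≤ x) :
    ENNReal.ofReal (x⁻¹ / log x) ≤
      16 * ∫⁻ y in Ici (1 : ℝ), ENNReal.ofReal (1 / (x + y * log √(x ^ 2 + y ^ 2)) ^ 2) := by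
  have hL : 0 < log x := log_pos (by linarith)
  set c := x / (2 * log x) with hc
  have hc2 : 2 ≤ c := by rw [hc, le_div_iff₀ (by positivity)]; linarith
  have hpoint : ∀ y ∈ Icc 1 c, ENNReal.ofReal (1 / (2 * x) ^ 2) ≤
      ENNReal.ofReal (1 / (x + y * log √(x ^ 2 + y ^ 2)) ^ 2) := by
    rintro y ⟨hy1, hyc⟩
    have hyx : 2 * y * log x ≤ x := by
      rw [hc, le_div_iff₀ (by positivity)] at hyc; linarith
    have hpos : 0 < x + y * log √(x ^ 2 + y ^ 2) := by
      have : 0 ≤ log √(x ^ 2 + y ^ 2) := log_nonneg (le_sqrt_of_sq_le (by nlinarith))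
      positivity
    gcongr
    exact add_mul_log_sqrt_le hx (by linarith) hyx
  calc ENNReal.ofReal (x⁻¹ / log x)
      ≤ 16 * (ENNReal.ofReal (1 / (2 * x) ^ 2) * ENNReal.ofReal (c - 1)) := by
        rw [← ENNReal.ofReal_mul (by positivity), ← ENNReal.ofReal_ofNat,
          ← ENNReal.ofReal_mul (by norm_num)]
        refine ENNReal.ofReal_le_ofReal ?_
        rw [hc]
        field_simp
        nlinarith
    _ = 16 * ∫⁻ _ in Icc 1 c, ENNReal.ofReal (1 / (2 * x) ^ 2) := by
        rw [setLIntegral_const, volume_Icc]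
    _ ≤ 16 * ∫⁻ y in Icc 1 c, ENNReal.ofReal (1 / (x + y * log √(x ^ 2 + y ^ 2)) ^ 2) := by
        gcongr 16 * ?_
        exact setLIntegral_mono' measurableSet_Icc hpoint
    _ ≤ 16 * ∫⁻ y in Ici 1, ENNReal.ofReal (1 / (x + y * log √(x ^ 2 + y ^ 2)) ^ 2) := by
        gcongr 16 * ?_
        exact lintegral_mono_set Icc_subset_Ici_self

theorem eventually_four_mul_log_le : ∀ᶠ x : ℝ in atTop, 4 * log x ≤ x := by
  filter_upwards [isLittleO_log_id_atTop.bound (by norm_num : (0 : ℝ) < 1 / 4),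
    eventually_ge_atTop 1] with x hbound hx
  rw [norm_of_nonneg (log_nonneg hx), id, norm_of_nonneg (by linarith)] at hbound
  linarith

theorem stmt3 :
    (∫⁻ x in Ici (1 : ℝ), ∫⁻ y in Ici (1 : ℝ),
        ENNReal.ofReal (1 / (x + y * Real.log (Real.sqrt (x ^ 2 + y ^ 2))) ^ 2)) = ⊤ := by
  set I := fun x : ℝ ↦
    ∫⁻ y in Ici (1 : ℝ), ENNReal.ofReal (1 / (x + y * log √(x ^ 2 + y ^ 2)) ^ 2)
  obtain ⟨x₀, hx₀⟩ := eventually_atTop.1 eventually_four_mul_log_le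
  set a := max x₀ 2
  have h16 : (16 : ENNReal) * ∫⁻ x in Ici 1, I x = ⊤ := by
    refine top_le_iff.1 ?_
    calc ⊤ = ∫⁻ x in Ici a, ENNReal.ofReal (x⁻¹ / log x) :=
          (lintegral_Ici_inv_div_log_eq_top (by simp [a])).symm
      _ ≤ ∫⁻ x in Ici a, 16 * I x := setLIntegral_mono' measurableSet_Ici fun x hx ↦
          inv_div_log_le_lintegral (le_of_max_le_right hx) (hx₀ x (le_of_max_le_left hx))
      _ = 16 * ∫⁻ x in Ici a, I x := lintegral_const_mul' _ _ (by simp)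
      _ ≤ 16 * ∫⁻ x in Ici 1, I x := by
          gcongr 16 * ?_
          exact lintegral_mono_set (Ici_subset_Ici.2 (by simp [a]))
  simpa [ENNReal.mul_eq_top] using h16
end

section
/- The integral $\int_1^{\infty} \left(\frac{1}{x + \ln x} - \frac{1}{x + x\ln x}\right) \frac{dx}{\ln x}$ diverges. -/
/-!
For `x > 1` the integrand equals `(x - 1) / (x (x + log x) (1 + log x))`, which is nonnegative
and, for `x ≥ 2`, at least a quarter of `1 / (x (1 + log x))`, the derivative of
`log (1 + log x)`. Since `log (1 + log x) → ∞`, the integrand is not integrable near `∞`, and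
a nonnegative non-integrable function has infinite lower Lebesgue integral.
-/

open Set MeasureTheory Real Filter Asymptotics

lemma one_div_add_sub_one_div_add_mul_div_eq {x L : ℝ} (hx : x ≠ 0) (hL : L ≠ 0)
    (hxL : x + L ≠ 0) (hL1 : 1 + L ≠ 0) :
    (1 / (x + L) - 1 / (x + x * L)) / L = (x - 1) / (x * (x + L) * (1 + L)) := by
  have : x + x * L = x * (1 + L) := by ring
  rw [this]
  field_simp
  ring

lemma integrand_eq {x : ℝ} (hx : 1 < x) :
    (1 / (x + log x) - 1 / (x + x * log x)) / log x
      = (x - 1) / (x * (x + log x) * (1 + log x)) := by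
  have hL := log_pos hx
  exact one_div_add_sub_one_div_add_mul_div_eq (by positivity) hL.ne' (by positivity)
    (by positivity)

lemma integrand_nonneg {x : ℝ} (hx : 1 < x) :
    0 ≤ (1 / (x + log x) - 1 / (x + x * log x)) / log x := by
  have hL := log_pos hx
  rw [integrand_eq hx]
  exact div_nonneg (by linarith) (by positivity)

lemma hasDerivAt_log_one_add_log {x : ℝ} (hx : x ≠ 0) (h : 1 + log x ≠ 0) :
    HasDerivAt (fun y ↦ log (1 + log y)) (x⁻¹ / (1 + log x)) x :=
  ((hasDerivAt_log hx).const_add 1).log h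

lemma tendsto_log_one_add_log_atTop : Tendsto (fun x ↦ log (1 + log x)) atTop atTop :=
  tendsto_log_atTop.comp (tendsto_atTop_add_const_left _ 1 tendsto_log_atTop)

lemma inv_div_one_add_log_le_integrand {x : ℝ} (hx : 2 ≤ x) :
    x⁻¹ / (1 + log x) ≤ 4 * ((1 / (x + log x) - 1 / (x + x * log x)) / log x) := by
  have hx1 : 1 < x := by linarith
  have hL := log_pos hx1
  have hLx : log x ≤ x - 1 := log_le_sub_one_of_pos (by linarith)
  rw [integrand_eq hx1, ← one_div, div_div, mul_div_assoc', div_le_div_iff₀ (by positivity)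
    (by positivity)]
  have : x * (x + log x) * (1 + log x) ≤ 4 * (x - 1) * (x * (1 + log x)) := by
    have : x * (x + log x) ≤ 4 * (x - 1) * x := by nlinarith
    nlinarith
  linarith

lemma not_integrableOn_integrand :
    ¬ IntegrableOn (fun x ↦ (1 / (x + log x) - 1 / (x + x * log x)) / log x) (Ioi 1) := by
  have hderiv : ∀ᶠ x in atTop,
      HasDerivAt (fun y ↦ log (1 + log y)) (x⁻¹ / (1 + log x)) x := by
    filter_upwards [eventually_ge_atTop 1] with x hx
    have := log_nonneg hx
    exact hasDerivAt_log_one_add_log (by positivity) (by positivity)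
  refine not_integrableOn_of_tendsto_norm_atTop_of_deriv_isBigO_filter atTop (Ioi_mem_atTop 1)
    (hderiv.mono fun x hx ↦ hx.differentiableAt)
    (tendsto_norm_atTop_atTop.comp tendsto_log_one_add_log_atTop) ?_
  refine IsBigO.of_bound 4 ?_
  filter_upwards [hderiv, eventually_ge_atTop 2] with x hx hx2
  have hx1 : 1 < x := by linarith
  rw [hx.deriv, norm_of_nonneg (by have := log_pos hx1; positivity),
    norm_of_nonneg (integrand_nonneg hx1)]
  exact inv_div_one_add_log_le_integrand hx2

lemma lintegral_ofReal_eq_top_of_not_integrable {α : Type*} [MeasurableSpace α] {μ : Measure α}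
    {f : α → ℝ} (hfm : AEStronglyMeasurable f μ) (hf : 0 ≤ᵐ[μ] f) (hfi : ¬ Integrable f μ) :
    ∫⁻ a, ENNReal.ofReal (f a) ∂μ = ⊤ := by
  by_contra h
  exact hfi ((lintegral_ofReal_ne_top_iff_integrable hfm hf).mp h)

theorem stmt4 :
    (∫⁻ x in Ioi (1 : ℝ),
        ENNReal.ofReal ((1 / (x + Real.log x) - 1 / (x + x * Real.log x)) / Real.log x)) = ⊤ := by
  refine lintegral_ofReal_eq_top_of_not_integrable ?_ ?_ not_integrableOn_integrand
  · exact Measurable.aestronglyMeasurable (by fun_prop)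
  · filter_upwards [ae_restrict_mem measurableSet_Ioi] with x hx
    exact integrand_nonneg hx
end

section
/- For real $\alpha$ with $1 \leq \alpha < 3/2$, the integral $\int_2^{\infty}\int_1^{x}\int_1^{y} \left(x + y\ln x + z\ln^2 x\right)^{-2\alpha}\, dz\, dy\, dx$ diverges. -/
/-!
On the part of the region where `x / 2 ≤ y` and `z ≤ x / 2`, a set of area about `x² / 4`, the
integrand is at least `(3 x log² x) ^ (-2α)`. Since `2α < 3`, the logarithms are absorbed by any
power of `x`, so the inner double integral is eventually at least `1 / x`, whose integral over a
half-line diverges.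
-/

open Set MeasureTheory Real Filter

theorem lintegral_Ici_ofReal_inv_eq_top {a : ℝ} (ha : 0 < a) :
    ∫⁻ x in Ici a, ENNReal.ofReal x⁻¹ = ⊤ := by
  by_contra h
  have hnonneg : 0 ≤ᵐ[volume.restrict (Ici a)] fun x : ℝ => x⁻¹ := by
    filter_upwards [ae_restrict_mem measurableSet_Ici] with x hx
    exact inv_nonneg.2 (ha.trans_le hx).le
  exact not_integrableOn_Ici_inv <|
    (lintegral_ofReal_ne_top_iff_integrable measurable_inv.aestronglyMeasurable hnonneg).1 h

theorem lintegral_Ici_eq_top_of_eventually_inv_le {f : ℝ → ENNReal} (a : ℝ)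
    (hf : ∀ᶠ x in atTop, ENNReal.ofReal x⁻¹ ≤ f x) : ∫⁻ x in Ici a, f x = ⊤ := by
  obtain ⟨X, hX⟩ := eventually_atTop.1 (hf.and (eventually_ge_atTop 1))
  set b := max a X
  refine eq_top_iff.2 ?_
  calc ⊤ = ∫⁻ x in Ici b, ENNReal.ofReal x⁻¹ :=
        (lintegral_Ici_ofReal_inv_eq_top (by linarith [(hX X le_rfl).2, le_max_right a X])).symm
    _ ≤ ∫⁻ x in Ici b, f x :=
        setLIntegral_mono' measurableSet_Ici fun x hx => (hX x (le_of_max_le_right hx)).1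
    _ ≤ ∫⁻ x in Ici a, f x := lintegral_mono_set (Ici_subset_Ici.2 (le_max_left a X))

theorem le_lintegral_Icc_Icc_of_le {f : ℝ → ℝ → ENNReal} {c : ENNReal} {x : ℝ} (hx : 2 ≤ x)
    (hf : ∀ y z, 1 ≤ z → z ≤ y → y ≤ x → c ≤ f y z) :
    c * ENNReal.ofReal (x / 2 - 1) * ENNReal.ofReal (x / 2) ≤
      ∫⁻ y in Icc 1 x, ∫⁻ z in Icc 1 y, f y z := by
  have hsquare : ∀ y ∈ Icc (x / 2) x, c * ENNReal.ofReal (x / 2 - 1) ≤ ∫⁻ z in Icc 1 y, f y z :=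
    fun y hy => calc
      c * ENNReal.ofReal (x / 2 - 1) = ∫⁻ _ in Icc 1 (x / 2), c := by
        rw [setLIntegral_const, Real.volume_Icc]
      _ ≤ ∫⁻ z in Icc 1 (x / 2), f y z :=
        setLIntegral_mono' measurableSet_Icc fun z hz => hf y z hz.1 (hz.2.trans hy.1) hy.2
      _ ≤ ∫⁻ z in Icc 1 y, f y z := lintegral_mono_set (Icc_subset_Icc le_rfl hy.1)
  calc c * ENNReal.ofReal (x / 2 - 1) * ENNReal.ofReal (x / 2)
      = ∫⁻ _ in Icc (x / 2) x, c * ENNReal.ofReal (x / 2 - 1) := by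
        rw [setLIntegral_const, Real.volume_Icc, sub_half]
    _ ≤ ∫⁻ y in Icc (x / 2) x, ∫⁻ z in Icc 1 y, f y z := setLIntegral_mono' measurableSet_Icc hsquare
    _ ≤ ∫⁻ y in Icc 1 x, ∫⁻ z in Icc 1 y, f y z :=
        lintegral_mono_set (Icc_subset_Icc (by linarith) le_rfl)

theorem rpow_le_rpow_add_mul_log_add_mul_log_sq {α x y z : ℝ} (hα : 0 ≤ α) (hx : exp 1 ≤ x)
    (hz : 1 ≤ z) (hzy : z ≤ y) (hyx : y ≤ x) :
    (3 * x * log x ^ 2) ^ (-(2 * α)) ≤ (x + y * log x + z * log x ^ 2) ^ (-(2 * α)) := by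
  have hx0 : 0 < x := (exp_pos 1).trans_le hx
  have hL : 1 ≤ log x := by rwa [le_log_iff_exp_le hx0]
  have hpos : 0 < x + y * log x + z * log x ^ 2 := by
    have : 0 ≤ y * log x := by nlinarith
    positivity
  refine rpow_le_rpow_of_nonpos hpos ?_ (by linarith)
  nlinarith [mul_le_mul_of_nonneg_right hyx (by linarith : 0 ≤ log x),
    mul_le_mul_of_nonneg_right (hzy.trans hyx) (sq_nonneg (log x)),
    mul_le_mul_of_nonneg_left (one_le_pow₀ hL : 1 ≤ log x ^ 2) hx0.le,
    mul_le_mul_of_nonneg_left hL (by linarith : 0 ≤ y)]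

theorem eventually_rpow_le_cube_div_eight {α : ℝ} (hα : α < 3 / 2) :
    ∀ᶠ x in atTop, (3 * x * log x ^ 2) ^ (2 * α) ≤ x ^ 3 / 8 := by
  have hε : 0 < 3 - 2 * α := by linarith
  filter_upwards [(isLittleO_log_rpow_rpow_atTop 6 hε).def (c := 1 / 216) (by norm_num),
    eventually_ge_atTop (exp 1)] with x hlog hx
  have hx0 : 0 < x := (exp_pos 1).trans_le hx
  have hL : 1 ≤ log x := by rwa [le_log_iff_exp_le hx0]
  rw [norm_of_nonneg (rpow_nonneg (by linarith) _), norm_of_nonneg (rpow_nonneg hx0.le _),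
    show (6 : ℝ) = (6 : ℕ) by norm_num, rpow_natCast] at hlog
  have h3L : 1 ≤ 3 * log x ^ 2 := by nlinarith
  calc (3 * x * log x ^ 2) ^ (2 * α) = x ^ (2 * α) * (3 * log x ^ 2) ^ (2 * α) := by
        rw [mul_comm 3 x, mul_assoc, mul_rpow hx0.le (by linarith)]
    _ ≤ x ^ (2 * α) * (3 * log x ^ 2) ^ (3 : ℕ) := by
        gcongr
        rw [← rpow_natCast (3 * log x ^ 2) 3]
        exact rpow_le_rpow_of_exponent_le h3L (by push_cast; linarith)
    _ ≤ x ^ (2 * α) * (x ^ (3 - 2 * α) / 8) := by gcongr; linarith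
    _ = x ^ 3 / 8 := by
        rw [mul_div_assoc', ← rpow_add hx0, add_sub_cancel, show (3 : ℝ) = (3 : ℕ) by norm_num,
          rpow_natCast]

theorem eventually_inv_le_rpow_mul {α : ℝ} (hα : α < 3 / 2) :
    ∀ᶠ x in atTop, x⁻¹ ≤ (3 * x * log x ^ 2) ^ (-(2 * α)) * (x / 2 - 1) * (x / 2) := by
  filter_upwards [eventually_rpow_le_cube_div_eight hα, eventually_ge_atTop 4] with x hC hx
  have hC0 : 0 < 3 * x * log x ^ 2 := by
    have : 0 < log x := log_pos (by linarith)
    positivity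
  calc x⁻¹ = (x ^ 3 / 8)⁻¹ * (x ^ 2 / 8) := by field_simp
    _ ≤ ((3 * x * log x ^ 2) ^ (2 * α))⁻¹ * ((x / 2 - 1) * (x / 2)) := by gcongr; nlinarith
    _ = (3 * x * log x ^ 2) ^ (-(2 * α)) * (x / 2 - 1) * (x / 2) := by
        rw [rpow_neg hC0.le, ← mul_assoc]

theorem stmt6 (α : ℝ) (h1 : 1 ≤ α) (h2 : α < 3 / 2) :
    (∫⁻ x in Ici (2 : ℝ), ∫⁻ y in Icc (1 : ℝ) x, ∫⁻ z in Icc (1 : ℝ) y,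
        ENNReal.ofReal ((x + y * Real.log x + z * Real.log x ^ 2) ^ (-(2 * α)))) = ⊤ := by
  refine lintegral_Ici_eq_top_of_eventually_inv_le 2 ?_
  filter_upwards [eventually_inv_le_rpow_mul h2, eventually_ge_atTop 3] with x hx hx3
  have hex : exp 1 ≤ x := by linarith [exp_one_lt_d9]
  calc ENNReal.ofReal x⁻¹
      ≤ ENNReal.ofReal ((3 * x * log x ^ 2) ^ (-(2 * α))) * ENNReal.ofReal (x / 2 - 1) *
          ENNReal.ofReal (x / 2) := by
        rw [← ENNReal.ofReal_mul (rpow_nonneg (by positivity) _),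
          ← ENNReal.ofReal_mul (mul_nonneg (rpow_nonneg (by positivity) _) (by linarith))]
        exact ENNReal.ofReal_le_ofReal hx
    _ ≤ _ := le_lintegral_Icc_Icc_of_le (by linarith) fun y z hz hzy hyx =>
        ENNReal.ofReal_le_ofReal <|
          rpow_le_rpow_add_mul_log_add_mul_log_sq (by linarith) hex hz hzy hyx
end

section
/- Let $2 \geq \alpha_1 \geq \alpha_2 > 0$ with $2 - 1/\alpha_1 - 1/\alpha_2 > 0$ (so in particular $\alpha_1 > 1$). Then for all integers $k, n \geq 1$, the integral $\int_1^{\infty}\int_1^{\infty} \frac{dt\, ds}{(t^{\alpha_1} + s^{\alpha_2})\left((t+k)^{\alpha_1} + (s+n)^{\alpha_2}\right)}$ is finite, and there exist constants $0 < c \leq C$ depending only on $\alpha_1, \alpha_2$ such that this integral lies between $c\,(k^{\alpha_1} + n^{\alpha_2})^{1/\alpha_1 + 1/\alpha_2 - 2}$ and $C\,(k^{\alpha_1} + n^{\alpha_2})^{1/\alpha_1 + 1/\alpha_2 - 2}$, provided $\alpha_2 < 2$. -/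
open Set MeasureTheory Real

/-!
Write `ρ(t, s) = t ^ α₁ + s ^ α₂` and `M = ρ(k, n)`; the natural scales are `a = M ^ (1/α₁)` in `t`
and `b = M ^ (1/α₂)` in `s`. On the box `[a, 2a] × [b, 2b]` the integrand is comparable to `M⁻²`,
and the area `a b` of the box gives the lower bound `M ^ (1/α₁ + 1/α₂ - 2)`.

For the upper bound, split `[1, ∞)²` at `a` and `b`. Weighted AM-GM gives
`ρ(t, s) ≥ t ^ (α₁ θ) s ^ (α₂ (1 - θ))`, while `ρ(t + k, s + n)` dominates `M`, `t ^ α₁`, `s ^ α₂`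
and `ρ(t, s)`. On each of the four quadrants a suitable combination bounds the integrand by
`M ^ (-j) t ^ (-α₁ w₁) s ^ (-α₂ w₂)` with `j + w₁ + w₂ = 2`, integrable there as soon as
`θ < 1/α₁`, `1 - θ < 1/α₂`, `2θ > 1/α₁` and `2(1 - θ) > 1/α₂`; such a `θ` exists precisely because
`1 < 1/α₁ + 1/α₂ < 2`. Integrating the powers up to or beyond the scales `a`, `b` turns each
quadrant into a constant times `M ^ (1/α₁ + 1/α₂ - 2)`.
-/

noncomputable def anisoNorm (α₁ α₂ t s : ℝ) : ℝ := t ^ α₁ + s ^ α₂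

noncomputable def anisoIntegral (α₁ α₂ k n : ℝ) : ENNReal :=
  ∫⁻ t in Ici 1, ∫⁻ s in Ici 1,
    ENNReal.ofReal (1 / (anisoNorm α₁ α₂ t s * anisoNorm α₁ α₂ (t + k) (s + n)))

lemma lintegral_Ioc_zero_rpow_neg {p a : ℝ} (hp : p < 1) (ha : 0 < a) :
    ∫⁻ x in Ioc 0 a, ENNReal.ofReal (x ^ (-p)) = ENNReal.ofReal (a ^ (1 - p) / (1 - p)) := by
  have hint : IntegrableOn (fun x : ℝ ↦ x ^ (-p)) (Ioc 0 a) :=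
    (intervalIntegrable_iff_integrableOn_Ioc_of_le ha.le).mp
      (intervalIntegral.intervalIntegrable_rpow' (by linarith))
  rw [← ofReal_integral_eq_lintegral_ofReal hint
      ((ae_restrict_mem measurableSet_Ioc).mono fun x hx ↦ rpow_nonneg hx.1.le _),
    ← intervalIntegral.integral_of_le ha.le, integral_rpow (Or.inl (by linarith)),
    zero_rpow (by linarith), sub_zero, neg_add_eq_sub]

lemma lintegral_Ioi_rpow_neg {p a : ℝ} (hp : 1 < p) (ha : 0 < a) :
    ∫⁻ x in Ioi a, ENNReal.ofReal (x ^ (-p)) = ENNReal.ofReal (a ^ (1 - p) / (p - 1)) := by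
  rw [← ofReal_integral_eq_lintegral_ofReal (integrableOn_Ioi_rpow_of_lt (by linarith) ha)
      ((ae_restrict_mem measurableSet_Ioi).mono fun x hx ↦ rpow_nonneg (ha.trans hx).le _),
    integral_Ioi_rpow_of_lt (by linarith) ha, neg_add_eq_sub, ← neg_sub p 1, div_neg, neg_div,
    neg_neg]

lemma rpow_one_div_rpow_one_sub_mul {M α w : ℝ} (hM : 0 ≤ M) (hα : α ≠ 0) :
    (M ^ (1 / α)) ^ (1 - α * w) = M ^ (1 / α - w) := by
  rw [← rpow_mul hM]
  congr 1
  field_simp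

lemma lintegral_Icc_one_rpow_neg_mul_le {M α w : ℝ} (hM : 0 < M) (hα : α ≠ 0) (hw : α * w < 1) :
    ∫⁻ t in Icc 1 (M ^ (1 / α)), ENNReal.ofReal (t ^ (-(α * w))) ≤
      ENNReal.ofReal (1 / (1 - α * w) * M ^ (1 / α - w)) := by
  calc ∫⁻ t in Icc 1 (M ^ (1 / α)), ENNReal.ofReal (t ^ (-(α * w)))
      ≤ ∫⁻ t in Ioc 0 (M ^ (1 / α)), ENNReal.ofReal (t ^ (-(α * w))) :=
        lintegral_mono_set fun t ht ↦ ⟨zero_lt_one.trans_le ht.1, ht.2⟩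
    _ = ENNReal.ofReal (1 / (1 - α * w) * M ^ (1 / α - w)) := by
        rw [lintegral_Ioc_zero_rpow_neg hw (by positivity), rpow_one_div_rpow_one_sub_mul hM.le hα,
          one_div_mul_eq_div]

lemma lintegral_Ioi_rpow_neg_mul_eq {M α w : ℝ} (hM : 0 < M) (hα : α ≠ 0) (hw : 1 < α * w) :
    ∫⁻ t in Ioi (M ^ (1 / α)), ENNReal.ofReal (t ^ (-(α * w))) =
      ENNReal.ofReal (1 / (α * w - 1) * M ^ (1 / α - w)) := by
  rw [lintegral_Ioi_rpow_neg hw (by positivity), rpow_one_div_rpow_one_sub_mul hM.le hα,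
    one_div_mul_eq_div]

lemma rpow_mul_rpow_le_anisoNorm {α₁ α₂ t s w : ℝ} (ht : 0 ≤ t) (hs : 0 ≤ s) (hw₀ : 0 ≤ w)
    (hw₁ : w ≤ 1) : t ^ (α₁ * w) * s ^ (α₂ * (1 - w)) ≤ anisoNorm α₁ α₂ t s := by
  have ht' : 0 ≤ t ^ α₁ := rpow_nonneg ht _
  have hs' : 0 ≤ s ^ α₂ := rpow_nonneg hs _
  rw [rpow_mul ht, rpow_mul hs]
  calc (t ^ α₁) ^ w * (s ^ α₂) ^ (1 - w) ≤ w * t ^ α₁ + (1 - w) * s ^ α₂ :=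
        geom_mean_le_arith_mean2_weighted hw₀ (by linarith) ht' hs' (by ring)
    _ ≤ anisoNorm α₁ α₂ t s := by unfold anisoNorm; nlinarith

lemma anisoNorm_le_anisoNorm {α₁ α₂ t s t' s' : ℝ} (hα₁ : 0 ≤ α₁) (hα₂ : 0 ≤ α₂) (ht : 0 ≤ t)
    (hs : 0 ≤ s) (htt' : t ≤ t') (hss' : s ≤ s') : anisoNorm α₁ α₂ t s ≤ anisoNorm α₁ α₂ t' s' :=
  add_le_add (rpow_le_rpow ht htt' hα₁) (rpow_le_rpow hs hss' hα₂)

lemma anisoNorm_mul_rpow_one_div {α₁ α₂ r M : ℝ} (hα₁ : α₁ ≠ 0) (hα₂ : α₂ ≠ 0) (hr : 0 ≤ r)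
    (hM : 0 ≤ M) :
    anisoNorm α₁ α₂ (r * M ^ (1 / α₁)) (r * M ^ (1 / α₂)) = (r ^ α₁ + r ^ α₂) * M := by
  simp only [anisoNorm, mul_rpow hr (rpow_nonneg hM _), one_div, rpow_inv_rpow hM hα₁,
    rpow_inv_rpow hM hα₂]
  ring

lemma rpow_mul_le_anisoNorm_mul {α₁ α₂ M j e f θ t s ψ : ℝ} (hM : 0 ≤ M) (ht : 0 < t) (hs : 0 < s)
    (hθ₀ : 0 ≤ θ) (hθ₁ : θ ≤ 1) (hψ : M ^ j * (t ^ (α₁ * e) * s ^ (α₂ * f)) ≤ ψ) :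
    M ^ j * (t ^ (α₁ * (θ + e)) * s ^ (α₂ * (1 - θ + f))) ≤ anisoNorm α₁ α₂ t s * ψ := by
  rw [mul_add, mul_add, rpow_add ht, rpow_add hs]
  calc M ^ j * (t ^ (α₁ * θ) * t ^ (α₁ * e) * (s ^ (α₂ * (1 - θ)) * s ^ (α₂ * f)))
      = t ^ (α₁ * θ) * s ^ (α₂ * (1 - θ)) * (M ^ j * (t ^ (α₁ * e) * s ^ (α₂ * f))) := by ring
    _ ≤ anisoNorm α₁ α₂ t s * ψ :=
        mul_le_mul (rpow_mul_rpow_le_anisoNorm ht.le hs.le hθ₀ hθ₁) hψ (by positivity)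
          (by unfold anisoNorm; positivity)

lemma setLIntegral_setLIntegral_ofReal_one_div_le {S T : Set ℝ} {g : ℝ → ℝ → ℝ}
    {α₁ α₂ M j w₁ w₂ A B : ℝ} (hS : MeasurableSet S) (hT : MeasurableSet T) (hS₀ : S ⊆ Ioi 0)
    (hT₀ : T ⊆ Ioi 0) (hM : 0 < M) (hA : 0 ≤ A) (hw : j + w₁ + w₂ = 2)
    (hg : ∀ t ∈ S, ∀ s ∈ T, M ^ j * (t ^ (α₁ * w₁) * s ^ (α₂ * w₂)) ≤ g t s)
    (hSint : ∫⁻ t in S, ENNReal.ofReal (t ^ (-(α₁ * w₁))) ≤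
      ENNReal.ofReal (A * M ^ (1 / α₁ - w₁)))
    (hTint : ∫⁻ s in T, ENNReal.ofReal (s ^ (-(α₂ * w₂))) ≤
      ENNReal.ofReal (B * M ^ (1 / α₂ - w₂))) :
    ∫⁻ t in S, ∫⁻ s in T, ENNReal.ofReal (1 / g t s) ≤
      ENNReal.ofReal (A * B * M ^ (1 / α₁ + 1 / α₂ - 2)) := by
  have hpt : ∀ t ∈ S, ∀ s ∈ T, ENNReal.ofReal (1 / g t s) ≤ ENNReal.ofReal (M ^ (-j)) *
      (ENNReal.ofReal (t ^ (-(α₁ * w₁))) * ENNReal.ofReal (s ^ (-(α₂ * w₂)))) := by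
    intro t ht s hs
    have ht₀ : 0 < t := hS₀ ht
    have hs₀ : 0 < s := hT₀ hs
    rw [← ENNReal.ofReal_mul (by positivity), ← ENNReal.ofReal_mul (by positivity)]
    refine ENNReal.ofReal_le_ofReal <|
      (one_div_le_one_div_of_le (by positivity) (hg t ht s hs)).trans_eq ?_
    rw [rpow_neg hM.le, rpow_neg ht₀.le, rpow_neg hs₀.le]
    field_simp
  have hmeas : ∀ c : ℝ, Measurable fun x : ℝ ↦ ENNReal.ofReal (x ^ c) :=
    fun c ↦ (measurable_id.pow_const c).ennreal_ofReal
  calc ∫⁻ t in S, ∫⁻ s in T, ENNReal.ofReal (1 / g t s)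
      ≤ ∫⁻ t in S, ∫⁻ s in T, ENNReal.ofReal (M ^ (-j)) *
          (ENNReal.ofReal (t ^ (-(α₁ * w₁))) * ENNReal.ofReal (s ^ (-(α₂ * w₂)))) :=
        setLIntegral_mono' hS fun t ht ↦ setLIntegral_mono' hT fun s hs ↦ hpt t ht s hs
    _ = ENNReal.ofReal (M ^ (-j)) * ((∫⁻ t in S, ENNReal.ofReal (t ^ (-(α₁ * w₁)))) *
          ∫⁻ s in T, ENNReal.ofReal (s ^ (-(α₂ * w₂)))) := by
        simp_rw [lintegral_const_mul' _ _ ENNReal.ofReal_ne_top]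
        rw [lintegral_mul_const _ (hmeas _)]
    _ ≤ ENNReal.ofReal (M ^ (-j)) * (ENNReal.ofReal (A * M ^ (1 / α₁ - w₁)) *
          ENNReal.ofReal (B * M ^ (1 / α₂ - w₂))) := by gcongr
    _ = ENNReal.ofReal (A * B * M ^ (1 / α₁ + 1 / α₂ - 2)) := by
        rw [← ENNReal.ofReal_mul (by positivity), ← ENNReal.ofReal_mul (by positivity)]
        congr 1
        have hexp : 1 / α₁ + 1 / α₂ - 2 = -j + (1 / α₁ - w₁) + (1 / α₂ - w₂) := by linarith
        rw [hexp, rpow_add hM, rpow_add hM]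
        ring

lemma setLIntegral_setLIntegral_le_of_subset_union {f : ℝ → ℝ → ENNReal}
    (hf : Measurable (Function.uncurry f)) {S S₁ S₂ T T₁ T₂ : Set ℝ} (hS : S ⊆ S₁ ∪ S₂)
    (hT : T ⊆ T₁ ∪ T₂) :
    ∫⁻ t in S, ∫⁻ s in T, f t s ≤
      (∫⁻ t in S₁, ∫⁻ s in T₁, f t s) + (∫⁻ t in S₁, ∫⁻ s in T₂, f t s) +
        (∫⁻ t in S₂, ∫⁻ s in T₁, f t s) + ∫⁻ t in S₂, ∫⁻ s in T₂, f t s := by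
  have hm : ∀ U : Set ℝ, Measurable fun t ↦ ∫⁻ s in U, f t s :=
    fun _ ↦ hf.lintegral_prod_right'
  calc ∫⁻ t in S, ∫⁻ s in T, f t s
      ≤ ∫⁻ t in S₁ ∪ S₂, (∫⁻ s in T₁, f t s) + ∫⁻ s in T₂, f t s :=
        (lintegral_mono fun t ↦ (lintegral_mono_set hT).trans (lintegral_union_le _ _ _)).trans
          (lintegral_mono_set hS)
    _ ≤ (∫⁻ t in S₁, (∫⁻ s in T₁, f t s) + ∫⁻ s in T₂, f t s) +
          ∫⁻ t in S₂, (∫⁻ s in T₁, f t s) + ∫⁻ s in T₂, f t s :=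
        lintegral_union_le _ _ _
    _ = _ := by
        rw [lintegral_add_left (hm T₁), lintegral_add_left (hm T₁)]
        ring

lemma measurable_ofReal_one_div_anisoNorm_mul (α₁ α₂ k n : ℝ) :
    Measurable (Function.uncurry fun t s : ℝ ↦
      ENNReal.ofReal (1 / (anisoNorm α₁ α₂ t s * anisoNorm α₁ α₂ (t + k) (s + n)))) := by
  unfold anisoNorm
  fun_prop

lemma le_anisoNorm_add {α₁ α₂ θ k n t s : ℝ} (hα₁ : 0 ≤ α₁) (hα₂ : 0 ≤ α₂) (hk : 0 ≤ k)
    (hn : 0 ≤ n) (ht : 0 ≤ t) (hs : 0 ≤ s) (hθ₀ : 0 ≤ θ) (hθ₁ : θ ≤ 1) :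
    anisoNorm α₁ α₂ k n ≤ anisoNorm α₁ α₂ (t + k) (s + n) ∧
      s ^ α₂ ≤ anisoNorm α₁ α₂ (t + k) (s + n) ∧
      t ^ α₁ ≤ anisoNorm α₁ α₂ (t + k) (s + n) ∧
      t ^ (α₁ * θ) * s ^ (α₂ * (1 - θ)) ≤ anisoNorm α₁ α₂ (t + k) (s + n) := by
  have hφψ : anisoNorm α₁ α₂ t s ≤ anisoNorm α₁ α₂ (t + k) (s + n) :=
    anisoNorm_le_anisoNorm hα₁ hα₂ ht hs (by linarith) (by linarith)
  exact ⟨anisoNorm_le_anisoNorm hα₁ hα₂ hk hn (by linarith) (by linarith),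
    (le_add_of_nonneg_left (rpow_nonneg ht _)).trans hφψ,
    (le_add_of_nonneg_right (rpow_nonneg hs _)).trans hφψ,
    (rpow_mul_rpow_le_anisoNorm ht hs hθ₀ hθ₁).trans hφψ⟩

lemma setLIntegral_setLIntegral_one_div_anisoNorm_mul_le {α₁ α₂ θ k n j e f A B : ℝ} {S T : Set ℝ}
    (hS : MeasurableSet S) (hT : MeasurableSet T) (hS₀ : S ⊆ Ioi 0) (hT₀ : T ⊆ Ioi 0)
    (hM : 0 < anisoNorm α₁ α₂ k n) (hθ₀ : 0 ≤ θ) (hθ₁ : θ ≤ 1) (hA : 0 ≤ A) (hjef : j + e + f = 1)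
    (hψ : ∀ t ∈ S, ∀ s ∈ T,
      anisoNorm α₁ α₂ k n ^ j * (t ^ (α₁ * e) * s ^ (α₂ * f)) ≤ anisoNorm α₁ α₂ (t + k) (s + n))
    (hSint : ∫⁻ t in S, ENNReal.ofReal (t ^ (-(α₁ * (θ + e)))) ≤
      ENNReal.ofReal (A * anisoNorm α₁ α₂ k n ^ (1 / α₁ - (θ + e))))
    (hTint : ∫⁻ s in T, ENNReal.ofReal (s ^ (-(α₂ * (1 - θ + f)))) ≤
      ENNReal.ofReal (B * anisoNorm α₁ α₂ k n ^ (1 / α₂ - (1 - θ + f)))) :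
    ∫⁻ t in S, ∫⁻ s in T,
        ENNReal.ofReal (1 / (anisoNorm α₁ α₂ t s * anisoNorm α₁ α₂ (t + k) (s + n))) ≤
      ENNReal.ofReal (A * B * anisoNorm α₁ α₂ k n ^ (1 / α₁ + 1 / α₂ - 2)) :=
  setLIntegral_setLIntegral_ofReal_one_div_le hS hT hS₀ hT₀ hM hA (by linarith)
    (fun t ht s hs ↦ rpow_mul_le_anisoNorm_mul hM.le (hS₀ ht) (hT₀ hs) hθ₀ hθ₁ (hψ t ht s hs))
    hSint hTint

lemma exists_anisoIntegral_le {α₁ α₂ θ : ℝ} (hα₁ : 0 < α₁) (hα₂ : 0 < α₂) (h₁ : α₁ * θ < 1)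
    (h₂ : α₂ * (1 - θ) < 1) (h₃ : 1 < α₁ * (2 * θ)) (h₄ : 1 < α₂ * (2 * (1 - θ))) :
    ∃ C, ∀ k n : ℝ, 0 ≤ k → 0 ≤ n → 0 < anisoNorm α₁ α₂ k n →
      anisoIntegral α₁ α₂ k n ≤
        ENNReal.ofReal (C * anisoNorm α₁ α₂ k n ^ (1 / α₁ + 1 / α₂ - 2)) := by
  have hθ₀ : 0 ≤ θ := by nlinarith
  have hθ₁ : θ ≤ 1 := by nlinarith
  have h₅ : 1 < α₁ * (θ + 1) := by nlinarith
  have h₆ : 1 < α₂ * (1 - θ + 1) := by nlinarith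
  -- one summand per quadrant `[1, a] × [1, b]`, `[1, a] × (b, ∞)`, `(a, ∞) × [1, b]`, `(a, ∞)²`
  refine ⟨1 / (1 - α₁ * (θ + 0)) * (1 / (1 - α₂ * (1 - θ + 0))) +
    1 / (1 - α₁ * (θ + 0)) * (1 / (α₂ * (1 - θ + 1) - 1)) +
    1 / (α₁ * (θ + 1) - 1) * (1 / (1 - α₂ * (1 - θ + 0))) +
    1 / (α₁ * (θ + θ) - 1) * (1 / (α₂ * (1 - θ + (1 - θ)) - 1)), ?_⟩
  intro k n hk hn hM
  set M := anisoNorm α₁ α₂ k n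
  have hψ (t : ℝ) (ht : t ∈ Ioi 0) (s : ℝ) (hs : s ∈ Ioi 0) :=
    le_anisoNorm_add (θ := θ) hα₁.le hα₂.le hk hn (le_of_lt ht) (le_of_lt hs) hθ₀ hθ₁
  have hIcc (x : ℝ) : Icc 1 x ⊆ Ioi 0 := fun _ ht ↦ zero_lt_one.trans_le ht.1
  have hIoi (α : ℝ) : Ioi (M ^ (1 / α)) ⊆ Ioi 0 := Ioi_subset_Ioi (by positivity)
  have q₁₁ := setLIntegral_setLIntegral_one_div_anisoNorm_mul_le (j := 1) (e := 0) (f := 0)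
    measurableSet_Icc measurableSet_Icc (hIcc _) (hIcc _) hM hθ₀ hθ₁
    (one_div_nonneg.2 (by linarith)) (by norm_num)
    (fun t ht s hs ↦ by simpa using (hψ t (hIcc _ ht) s (hIcc _ hs)).1)
    (lintegral_Icc_one_rpow_neg_mul_le hM hα₁.ne' (by linarith))
    (lintegral_Icc_one_rpow_neg_mul_le hM hα₂.ne' (by linarith))
  have q₁₂ := setLIntegral_setLIntegral_one_div_anisoNorm_mul_le (j := 0) (e := 0) (f := 1)
    measurableSet_Icc measurableSet_Ioi (hIcc _) (hIoi _) hM hθ₀ hθ₁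
    (one_div_nonneg.2 (by linarith)) (by norm_num)
    (fun t ht s hs ↦ by simpa using (hψ t (hIcc _ ht) s (hIoi _ hs)).2.1)
    (lintegral_Icc_one_rpow_neg_mul_le hM hα₁.ne' (by linarith))
    (lintegral_Ioi_rpow_neg_mul_eq hM hα₂.ne' h₆).le
  have q₂₁ := setLIntegral_setLIntegral_one_div_anisoNorm_mul_le (j := 0) (e := 1) (f := 0)
    measurableSet_Ioi measurableSet_Icc (hIoi _) (hIcc _) hM hθ₀ hθ₁
    (one_div_nonneg.2 (by linarith)) (by norm_num)
    (fun t ht s hs ↦ by simpa using (hψ t (hIoi _ ht) s (hIcc _ hs)).2.2.1)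
    (lintegral_Ioi_rpow_neg_mul_eq hM hα₁.ne' h₅).le
    (lintegral_Icc_one_rpow_neg_mul_le hM hα₂.ne' (by linarith))
  have q₂₂ := setLIntegral_setLIntegral_one_div_anisoNorm_mul_le (j := 0) (e := θ) (f := 1 - θ)
    measurableSet_Ioi measurableSet_Ioi (hIoi _) (hIoi _) hM hθ₀ hθ₁
    (one_div_nonneg.2 (by linarith)) (by ring)
    (fun t ht s hs ↦ by simpa using (hψ t (hIoi _ ht) s (hIoi _ hs)).2.2.2)
    (lintegral_Ioi_rpow_neg_mul_eq hM hα₁.ne' (by linarith)).le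
    (lintegral_Ioi_rpow_neg_mul_eq hM hα₂.ne' (by linarith)).le
  have hnonneg (x y : ℝ) (hx : 0 < x) (hy : 0 < y) :
      0 ≤ 1 / x * (1 / y) * M ^ (1 / α₁ + 1 / α₂ - 2) := by positivity
  refine (setLIntegral_setLIntegral_le_of_subset_union
    (measurable_ofReal_one_div_anisoNorm_mul α₁ α₂ k n)
    (Ici_subset_Icc_union_Ioi (b := M ^ (1 / α₁)))
    (Ici_subset_Icc_union_Ioi (b := M ^ (1 / α₂)))).trans ?_
  rw [add_mul, add_mul, add_mul, ENNReal.ofReal_add, ENNReal.ofReal_add, ENNReal.ofReal_add]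
  · gcongr
  all_goals repeat' apply add_nonneg
  all_goals exact hnonneg _ _ (by linarith) (by linarith)

lemma one_div_le_one_div_anisoNorm_mul_of_mem_Icc {α₁ α₂ M k n t s : ℝ} (hα₁ : 0 < α₁)
    (hα₂ : 0 < α₂) (hM : 0 < M) (hk : 0 ≤ k) (hn : 0 ≤ n) (hka : k ≤ M ^ (1 / α₁))
    (hnb : n ≤ M ^ (1 / α₂)) (ht : t ∈ Icc (M ^ (1 / α₁)) (2 * M ^ (1 / α₁)))
    (hs : s ∈ Icc (M ^ (1 / α₂)) (2 * M ^ (1 / α₂))) :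
    1 / ((2 ^ α₁ + 2 ^ α₂) * (3 ^ α₁ + 3 ^ α₂) * M ^ 2) ≤
      1 / (anisoNorm α₁ α₂ t s * anisoNorm α₁ α₂ (t + k) (s + n)) := by
  obtain ⟨hat, ht⟩ := ht
  obtain ⟨hbs, hs⟩ := hs
  have ha : 0 < M ^ (1 / α₁) := by positivity
  have hb : 0 < M ^ (1 / α₂) := by positivity
  have hφ : 0 < anisoNorm α₁ α₂ t s := by
    unfold anisoNorm
    have : 0 < t := by linarith
    have : 0 < s := by linarith
    positivity
  have hψ : 0 < anisoNorm α₁ α₂ (t + k) (s + n) := hφ.trans_le <|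
    anisoNorm_le_anisoNorm hα₁.le hα₂.le (by linarith) (by linarith) (by linarith) (by linarith)
  have h₂ := anisoNorm_le_anisoNorm hα₁.le hα₂.le (by linarith) (by linarith) ht hs
  have h₃ := anisoNorm_le_anisoNorm hα₁.le hα₂.le (by linarith) (by linarith)
    (by linarith : t + k ≤ 3 * M ^ (1 / α₁)) (by linarith : s + n ≤ 3 * M ^ (1 / α₂))
  rw [anisoNorm_mul_rpow_one_div hα₁.ne' hα₂.ne' (by norm_num) hM.le] at h₂ h₃
  refine one_div_le_one_div_of_le (mul_pos hφ hψ) ?_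
  calc _ ≤ (2 ^ α₁ + 2 ^ α₂) * M * ((3 ^ α₁ + 3 ^ α₂) * M) :=
        mul_le_mul h₂ h₃ hψ.le (hφ.le.trans h₂)
    _ = _ := by ring

lemma ofReal_mul_rpow_le_anisoIntegral {α₁ α₂ k n : ℝ} (hα₁ : 0 < α₁) (hα₂ : 0 < α₂) (hk : 0 ≤ k)
    (hn : 0 ≤ n) (hM : 1 ≤ anisoNorm α₁ α₂ k n) :
    ENNReal.ofReal (1 / ((2 ^ α₁ + 2 ^ α₂) * (3 ^ α₁ + 3 ^ α₂)) *
        anisoNorm α₁ α₂ k n ^ (1 / α₁ + 1 / α₂ - 2)) ≤ anisoIntegral α₁ α₂ k n := by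
  set M := anisoNorm α₁ α₂ k n
  set a := M ^ (1 / α₁) with ha_def
  set b := M ^ (1 / α₂) with hb_def
  have hM₀ : 0 < M := by linarith
  have ha : 1 ≤ a := one_le_rpow hM (by positivity)
  have hb : 1 ≤ b := one_le_rpow hM (by positivity)
  have hka : k ≤ a := by
    rw [ha_def, one_div, le_rpow_inv_iff_of_pos hk hM₀.le hα₁]
    exact le_add_of_nonneg_right (rpow_nonneg hn _)
  have hnb : n ≤ b := by
    rw [hb_def, one_div, le_rpow_inv_iff_of_pos hn hM₀.le hα₂]
    exact le_add_of_nonneg_left (rpow_nonneg hk _)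
  calc ENNReal.ofReal (1 / ((2 ^ α₁ + 2 ^ α₂) * (3 ^ α₁ + 3 ^ α₂)) * M ^ (1 / α₁ + 1 / α₂ - 2))
      = ∫⁻ t in Icc a (2 * a), ∫⁻ s in Icc b (2 * b),
          ENNReal.ofReal (1 / ((2 ^ α₁ + 2 ^ α₂) * (3 ^ α₁ + 3 ^ α₂) * M ^ 2)) := by
        simp only [setLIntegral_const, Real.volume_Icc, two_mul, add_sub_cancel_right]
        rw [← ENNReal.ofReal_mul (by positivity),
          ← ENNReal.ofReal_mul (mul_nonneg (by positivity) (by linarith)),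
          rpow_sub hM₀, rpow_add hM₀, rpow_two]
        congr 1
        field_simp
        ring
    _ ≤ ∫⁻ t in Icc a (2 * a), ∫⁻ s in Icc b (2 * b),
          ENNReal.ofReal (1 / (anisoNorm α₁ α₂ t s * anisoNorm α₁ α₂ (t + k) (s + n))) :=
        setLIntegral_mono' measurableSet_Icc fun t ht ↦ setLIntegral_mono' measurableSet_Icc
          fun s hs ↦ ENNReal.ofReal_le_ofReal <|
            one_div_le_one_div_anisoNorm_mul_of_mem_Icc hα₁ hα₂ hM₀ hk hn hka hnb ht hs
    _ ≤ anisoIntegral α₁ α₂ k n :=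
        (lintegral_mono fun t ↦ lintegral_mono_set fun s hs ↦ hb.trans hs.1).trans
          (lintegral_mono_set fun t ht ↦ ha.trans ht.1)

lemma exists_splitting_weight {α₁ α₂ : ℝ} (hα₁ : 0 < α₁) (hα₂ : 0 < α₂)
    (hlo : 1 < 1 / α₁ + 1 / α₂) (hhi : 1 / α₁ + 1 / α₂ < 2) :
    ∃ θ, α₁ * θ < 1 ∧ α₂ * (1 - θ) < 1 ∧ 1 < α₁ * (2 * θ) ∧ 1 < α₂ * (2 * (1 - θ)) := by
  have h₁ : 0 < 1 / α₁ := by positivity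
  have h₂ : 0 < 1 / α₂ := by positivity
  obtain ⟨θ, hlow, hupp⟩ :
      ∃ θ, max (1 - 1 / α₂) (1 / α₁ / 2) < θ ∧ θ < min (1 / α₁) (1 - 1 / α₂ / 2) :=
    exists_between <|
      max_lt (lt_min (by linarith) (by linarith)) (lt_min (by linarith) (by linarith))
  rw [max_lt_iff] at hlow
  rw [lt_min_iff] at hupp
  exact ⟨θ, (lt_div_iff₀' hα₁).1 hupp.1, (lt_div_iff₀' hα₂).1 (by linarith : 1 - θ < 1 / α₂),
    (div_lt_iff₀' hα₁).1 (by linarith : 1 / α₁ < 2 * θ),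
    (div_lt_iff₀' hα₂).1 (by linarith : 1 / α₂ < 2 * (1 - θ))⟩

theorem stmt7 (α₁ α₂ : ℝ) (h2 : 0 < α₂) (h21 : α₂ ≤ α₁) (h12 : α₁ ≤ 2) (h2lt : α₂ < 2)
    (hγ : 0 < 2 - 1 / α₁ - 1 / α₂) :
    ∃ c C : ℝ, 0 < c ∧ c ≤ C ∧ ∀ k n : ℕ, 1 ≤ k → 1 ≤ n →
      (∫⁻ t in Ici (1 : ℝ), ∫⁻ s in Ici (1 : ℝ),
          ENNReal.ofReal (1 / ((t ^ α₁ + s ^ α₂) *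
            ((t + (k : ℝ)) ^ α₁ + (s + (n : ℝ)) ^ α₂)))) ≠ ⊤ ∧
      ENNReal.ofReal (c * ((k : ℝ) ^ α₁ + (n : ℝ) ^ α₂) ^ (1 / α₁ + 1 / α₂ - 2)) ≤
        (∫⁻ t in Ici (1 : ℝ), ∫⁻ s in Ici (1 : ℝ),
          ENNReal.ofReal (1 / ((t ^ α₁ + s ^ α₂) *
            ((t + (k : ℝ)) ^ α₁ + (s + (n : ℝ)) ^ α₂)))) ∧
      (∫⁻ t in Ici (1 : ℝ), ∫⁻ s in Ici (1 : ℝ),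
          ENNReal.ofReal (1 / ((t ^ α₁ + s ^ α₂) *
            ((t + (k : ℝ)) ^ α₁ + (s + (n : ℝ)) ^ α₂)))) ≤
        ENNReal.ofReal (C * ((k : ℝ) ^ α₁ + (n : ℝ) ^ α₂) ^ (1 / α₁ + 1 / α₂ - 2)) := by
  have hα₁ : 0 < α₁ := h2.trans_le h21
  have hlo : 1 < 1 / α₁ + 1 / α₂ := by
    have := one_div_le_one_div_of_le hα₁ h12
    have := one_div_lt_one_div_of_lt h2 h2lt
    linarith
  obtain ⟨θ, h₁, h₂, h₃, h₄⟩ := exists_splitting_weight hα₁ h2 hlo (by linarith)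
  obtain ⟨C, hC⟩ := exists_anisoIntegral_le hα₁ h2 h₁ h₂ h₃ h₄
  set c : ℝ := 1 / ((2 ^ α₁ + 2 ^ α₂) * (3 ^ α₁ + 3 ^ α₂))
  refine ⟨c, max c C, by positivity, le_max_left _ _, fun k n hk hn ↦ ?_⟩
  have hk₀ : (0 : ℝ) ≤ k := k.cast_nonneg
  have hn₀ : (0 : ℝ) ≤ n := n.cast_nonneg
  have hM : 1 ≤ anisoNorm α₁ α₂ k n :=
    le_add_of_le_of_nonneg (one_le_rpow (by exact_mod_cast hk) hα₁.le) (rpow_nonneg hn₀ _)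
  have hupper := (hC k n hk₀ hn₀ (by linarith)).trans <| ENNReal.ofReal_le_ofReal <|
    mul_le_mul_of_nonneg_right (le_max_right c C) (rpow_nonneg (by linarith) _)
  exact ⟨ne_top_of_le_ne_top ENNReal.ofReal_ne_top hupper,
    ofReal_mul_rpow_le_anisoIntegral hα₁ h2 hk₀ hn₀ hM, hupper⟩
end

section
/- Let $2 \geq \alpha_1 \geq \alpha_2 > 0$ with $2 - 1/\alpha_1 - 1/\alpha_2 \leq 0$. Then $\int_1^{\infty}\int_1^{\infty} \frac{dt\, ds}{(t^{\alpha_1} + s^{\alpha_2})^2} = \infty$. -/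
open Set MeasureTheory Real

/-! For `t > 2` put `T = t ^ (α₁ / α₂) ≥ 2`. On `1 ≤ s ≤ T` we have `s ^ α₂ ≤ t ^ α₁`, so the
integrand is at least `1 / (2 t ^ α₁) ^ 2`, and the inner integral is at least
`(T - 1) / (4 t ^ (2 α₁)) ≥ t ^ (α₁ / α₂ - 2 α₁) / 8`. The condition `1 / α₁ + 1 / α₂ ≥ 2` says
exactly that this exponent is at least `-1`, so the outer integral diverges. -/

theorem lintegral_Ioi_const_mul_rpow_eq_top {a c p : ℝ} (ha : 0 < a) (hc : 0 < c) (hp : -1 ≤ p) :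
    ∫⁻ t in Ioi a, ENNReal.ofReal (c * t ^ p) = ⊤ := by
  by_contra h
  have hint : IntegrableOn (fun t : ℝ => c * t ^ p) (Ioi a) :=
    (lintegral_ofReal_ne_top_iff_integrable (by fun_prop) <|
      ae_restrict_of_forall_mem measurableSet_Ioi fun t ht =>
        mul_nonneg hc.le (rpow_nonneg (ha.trans ht).le p)).1 h
  rw [IntegrableOn, integrable_const_mul_iff (isUnit_iff_ne_zero.2 hc.ne'),
    ← IntegrableOn, integrableOn_Ioi_rpow_iff ha] at hint
  exact hp.not_gt hint

theorem ofReal_le_lintegral_Ici_one_inv_add_rpow_sq {a α : ℝ} (ha : 0 < a) (hα : 0 < α)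
    (h2 : 2 ≤ a ^ α⁻¹) :
    ENNReal.ofReal (a ^ α⁻¹ / (8 * a ^ 2)) ≤
      ∫⁻ s in Ici 1, ENNReal.ofReal (1 / (a + s ^ α) ^ 2) := by
  set T := a ^ α⁻¹
  have hT : T ^ α = a := rpow_inv_rpow ha.le hα.ne'
  calc ENNReal.ofReal (T / (8 * a ^ 2))
      ≤ ENNReal.ofReal (1 / (2 * a) ^ 2) * ENNReal.ofReal (T - 1) := by
        rw [← ENNReal.ofReal_mul (by positivity)]
        refine ENNReal.ofReal_le_ofReal ?_
        rw [div_mul_eq_mul_div, one_mul, div_le_div_iff₀ (by positivity) (by positivity)]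
        nlinarith [sq_nonneg a, mul_pos ha ha]
    _ = ∫⁻ _ in Icc 1 T, ENNReal.ofReal (1 / (2 * a) ^ 2) := by
        rw [setLIntegral_const, volume_Icc]
    _ ≤ ∫⁻ s in Icc 1 T, ENNReal.ofReal (1 / (a + s ^ α) ^ 2) := by
        refine setLIntegral_mono' measurableSet_Icc fun s hs => ENNReal.ofReal_le_ofReal ?_
        have hs0 : 0 < s := zero_lt_one.trans_le hs.1
        have hsa : s ^ α ≤ a := hT ▸ rpow_le_rpow hs0.le hs.2 hα.le
        have hsα : 0 < s ^ α := rpow_pos_of_pos hs0 α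
        gcongr
        linarith
    _ ≤ _ := lintegral_mono_set Icc_subset_Ici_self

theorem stmt8_general (α₁ α₂ : ℝ) (h2 : 0 < α₂) (h21 : α₂ ≤ α₁)
    (hγ : 2 - 1 / α₁ - 1 / α₂ ≤ 0) :
    (∫⁻ t in Ici (1 : ℝ), ∫⁻ s in Ici (1 : ℝ),
        ENNReal.ofReal (1 / (t ^ α₁ + s ^ α₂) ^ 2)) = ⊤ := by
  have hα₁ : 0 < α₁ := h2.trans_le h21
  have hp : -1 ≤ α₁ / α₂ - 2 * α₁ := by
    have := mul_le_mul_of_nonneg_left hγ hα₁.le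
    rw [mul_sub, mul_sub, mul_one_div_cancel hα₁.ne', mul_one_div] at this
    linarith
  rw [eq_top_iff, ← lintegral_Ioi_const_mul_rpow_eq_top two_pos (by norm_num : (0 : ℝ) < 8⁻¹) hp]
  refine (setLIntegral_mono' measurableSet_Ioi fun t (ht2 : 2 < t) => ?_).trans
    (lintegral_mono_set (Ioi_subset_Ici one_le_two))
  have ht : 0 < t := two_pos.trans ht2
  have hT : (t ^ α₁) ^ α₂⁻¹ = t ^ (α₁ / α₂) := by rw [← rpow_mul ht.le, div_eq_mul_inv]
  have hT2 : 2 ≤ t ^ (α₁ / α₂) :=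
    ht2.le.trans (self_le_rpow_of_one_le (one_le_two.trans ht2.le) ((one_le_div h2).2 h21))
  convert ofReal_le_lintegral_Ici_one_inv_add_rpow_sq (rpow_pos_of_pos ht α₁) h2 (hT ▸ hT2)
    using 2
  -- `8⁻¹ * t ^ (α₁ / α₂ - 2 * α₁) = (t ^ α₁) ^ α₂⁻¹ / (8 * (t ^ α₁) ^ 2)`
  rw [hT, ← rpow_natCast, ← rpow_mul ht.le, sub_eq_add_neg, rpow_add ht, rpow_neg ht.le]
  push_cast
  rw [mul_comm α₁]
  ring

theorem stmt8 (α₁ α₂ : ℝ) (h2 : 0 < α₂) (h21 : α₂ ≤ α₁) (h12 : α₁ ≤ 2)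
    (hγ : 2 - 1 / α₁ - 1 / α₂ ≤ 0) :
    (∫⁻ t in Ici (1 : ℝ), ∫⁻ s in Ici (1 : ℝ),
        ENNReal.ofReal (1 / (t ^ α₁ + s ^ α₂) ^ 2)) = ⊤ :=
  stmt8_general α₁ α₂ h2 h21 hγ
end

section
/- Let $0 < \alpha_3 \leq \alpha_2 \leq \alpha_1 \leq 2$ with $2 - 1/\alpha_1 - 1/\alpha_2 - 1/\alpha_3 \leq 0$. Then $\int_1^{\infty}\int_1^{\infty}\int_1^{\infty} \frac{dx_1\, dx_2\, dx_3}{(x_1^{\alpha_1} + x_2^{\alpha_2} + x_3^{\alpha_3})^2} = \infty$. -/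
/-!
Fix `x₁ ≥ 2` and put `t = x₁ ^ α₁`. On the box `[1, t ^ (1/α₂)] × [1, t ^ (1/α₃)]` every term of the
denominator is at most `t`, so the integrand is at least `1 / (9 t²)`, while the box has area
`≳ t ^ (1/α₂ + 1/α₃) ≥ t² / x₁` because `1/α₁ + 1/α₂ + 1/α₃ ≥ 2`. Hence the inner double integral is
`≳ 1 / x₁`, which is not integrable on `[2, ∞)`.
-/

open Set MeasureTheory Real

lemma mul_ofReal_sub_le_setLIntegral_Ici {f : ℝ → ENNReal} {c : ENNReal} {a b : ℝ}
    (h : ∀ x ∈ Icc a b, c ≤ f x) : c * ENNReal.ofReal (b - a) ≤ ∫⁻ x in Ici a, f x :=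
  calc c * ENNReal.ofReal (b - a) = ∫⁻ _ in Icc a b, c := by
        rw [setLIntegral_const, Real.volume_Icc]
    _ ≤ ∫⁻ x in Icc a b, f x := setLIntegral_mono' measurableSet_Icc h
    _ ≤ ∫⁻ x in Ici a, f x := lintegral_mono_set Icc_subset_Ici_self

lemma setLIntegral_Ici_ofReal_inv_eq_top {a : ℝ} (ha : 0 ≤ a) :
    ∫⁻ x in Ici a, ENNReal.ofReal x⁻¹ = ⊤ := by
  by_contra h
  have hnonneg : 0 ≤ᵐ[volume.restrict (Ici a)] fun x : ℝ ↦ x⁻¹ :=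
    (ae_restrict_iff' measurableSet_Ici).2 <| .of_forall fun x hx ↦ inv_nonneg.2 (ha.trans hx)
  exact not_integrableOn_Ici_inv <|
    (lintegral_ofReal_ne_top_iff_integrable measurable_inv.aestronglyMeasurable hnonneg).1 h

lemma inv_sq_three_mul_le_inv_sq_add {t u v : ℝ} (ht : 0 < t) (hu : 0 ≤ u) (hv : 0 ≤ v)
    (hut : u ≤ t) (hvt : v ≤ t) : 1 / (9 * t ^ 2) ≤ 1 / (t + u + v) ^ 2 := by
  have h : (t + u + v) ^ 2 ≤ (3 * t) ^ 2 := pow_le_pow_left₀ (by positivity) (by linarith) 2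
  exact one_div_le_one_div_of_le (by positivity) (by linarith)

lemma le_lintegral_Ici_Ici_inv_sq_add_rpow {t a b : ℝ} (ht : 0 < t) (ha : 0 < a) (hb : 0 < b) :
    ENNReal.ofReal (1 / (9 * t ^ 2)) * ENNReal.ofReal (t ^ b⁻¹ - 1) *
        ENNReal.ofReal (t ^ a⁻¹ - 1) ≤
      ∫⁻ y in Ici (1 : ℝ), ∫⁻ z in Ici (1 : ℝ), ENNReal.ofReal (1 / (t + y ^ a + z ^ b) ^ 2) := by
  refine mul_ofReal_sub_le_setLIntegral_Ici fun y hy ↦ ?_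
  refine mul_ofReal_sub_le_setLIntegral_Ici fun z hz ↦ ENNReal.ofReal_le_ofReal ?_
  have hy0 : 0 ≤ y := zero_le_one.trans hy.1
  have hz0 : 0 ≤ z := zero_le_one.trans hz.1
  exact inv_sq_three_mul_le_inv_sq_add ht (rpow_nonneg hy0 a) (rpow_nonneg hz0 b)
    ((le_rpow_inv_iff_of_pos hy0 ht.le ha).1 hy.2) ((le_rpow_inv_iff_of_pos hz0 ht.le hb).1 hz.2)

lemma self_le_rpow_rpow_inv {x a b : ℝ} (hx : 1 ≤ x) (ha : 0 < a) (hab : a ≤ b) :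
    x ≤ (x ^ b) ^ a⁻¹ := by
  rw [← rpow_mul (zero_le_one.trans hx)]
  exact self_le_rpow_of_one_le hx (by rwa [← div_eq_mul_inv, one_le_div ha])

lemma mul_inv_le_inv_sq_mul_sub_one_mul_sub_one {t x p q : ℝ} (ht : 0 < t) (hx : 0 < x)
    (hp : 2 ≤ p) (hq : 2 ≤ q) (h : t ^ 2 ≤ x * (p * q)) :
    1 / 36 * x⁻¹ ≤ 1 / (9 * t ^ 2) * (q - 1) * (p - 1) := by
  rw [show 1 / (9 * t ^ 2) * (q - 1) * (p - 1) = (q - 1) * (p - 1) / (9 * t ^ 2) by ring,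
    le_div_iff₀ (by positivity)]
  have hpq : p * q ≤ 4 * ((q - 1) * (p - 1)) := by nlinarith
  calc 1 / 36 * x⁻¹ * (9 * t ^ 2) = t ^ 2 / (4 * x) := by field_simp; ring
    _ ≤ x * (p * q) / (4 * x) := by gcongr
    _ = p * q / 4 := by field_simp
    _ ≤ (q - 1) * (p - 1) := by linarith

lemma two_mul_le_one_add_mul_inv_add_mul_inv {α₁ α₂ α₃ : ℝ} (h1 : 0 < α₁)
    (hγ : 2 - 1 / α₁ - 1 / α₂ - 1 / α₃ ≤ 0) :
    2 * α₁ ≤ 1 + (α₁ * α₂⁻¹ + α₁ * α₃⁻¹) := by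
  have h : 2 * α₁ - 1 - α₁ * α₂⁻¹ - α₁ * α₃⁻¹ = α₁ * (2 - 1 / α₁ - 1 / α₂ - 1 / α₃) := by
    field_simp
  nlinarith [mul_nonpos_of_nonneg_of_nonpos h1.le hγ]

lemma ofReal_inv_le_lintegral {α₁ α₂ α₃ x : ℝ} (h3 : 0 < α₃) (h32 : α₃ ≤ α₂) (h21 : α₂ ≤ α₁)
    (hγ : 2 - 1 / α₁ - 1 / α₂ - 1 / α₃ ≤ 0) (hx : 2 ≤ x) :
    ENNReal.ofReal (1 / 36) * ENNReal.ofReal x⁻¹ ≤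
      ∫⁻ x₂ in Ici (1 : ℝ), ∫⁻ x₃ in Ici (1 : ℝ),
        ENNReal.ofReal (1 / (x ^ α₁ + x₂ ^ α₂ + x₃ ^ α₃) ^ 2) := by
  have h2 : 0 < α₂ := h3.trans_le h32
  have h1 : 0 < α₁ := h2.trans_le h21
  have hx1 : 1 ≤ x := one_le_two.trans hx
  have hx0 : 0 < x := one_pos.trans_le hx1
  have ht : 0 < x ^ α₁ := rpow_pos_of_pos hx0 α₁
  have hp : 2 ≤ (x ^ α₁) ^ α₂⁻¹ := hx.trans (self_le_rpow_rpow_inv hx1 h2 h21)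
  have hq : 2 ≤ (x ^ α₁) ^ α₃⁻¹ := hx.trans (self_le_rpow_rpow_inv hx1 h3 (h32.trans h21))
  have hpq : (x ^ α₁) ^ 2 ≤ x * ((x ^ α₁) ^ α₂⁻¹ * (x ^ α₁) ^ α₃⁻¹) := by
    rw [← rpow_mul hx0.le, ← rpow_mul hx0.le, ← rpow_add hx0,
      ← rpow_one_add' hx0.le (by positivity), ← rpow_mul_natCast hx0.le, mul_comm]
    exact rpow_le_rpow_of_exponent_le hx1
      (by exact_mod_cast two_mul_le_one_add_mul_inv_add_mul_inv h1 hγ)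
  calc ENNReal.ofReal (1 / 36) * ENNReal.ofReal x⁻¹
      ≤ ENNReal.ofReal (1 / (9 * (x ^ α₁) ^ 2)) * ENNReal.ofReal ((x ^ α₁) ^ α₃⁻¹ - 1) *
          ENNReal.ofReal ((x ^ α₁) ^ α₂⁻¹ - 1) := by
        rw [← ENNReal.ofReal_mul (by norm_num), ← ENNReal.ofReal_mul (by positivity),
          ← ENNReal.ofReal_mul (mul_nonneg (by positivity) (by linarith))]
        exact ENNReal.ofReal_le_ofReal (mul_inv_le_inv_sq_mul_sub_one_mul_sub_one ht hx0 hp hq hpq)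
    _ ≤ _ := le_lintegral_Ici_Ici_inv_sq_add_rpow ht h2 h3

theorem stmt9_general (α₁ α₂ α₃ : ℝ) (h3 : 0 < α₃) (h32 : α₃ ≤ α₂) (h21 : α₂ ≤ α₁)
    (hγ : 2 - 1 / α₁ - 1 / α₂ - 1 / α₃ ≤ 0) :
    (∫⁻ x₁ in Ici (1 : ℝ), ∫⁻ x₂ in Ici (1 : ℝ), ∫⁻ x₃ in Ici (1 : ℝ),
        ENNReal.ofReal (1 / (x₁ ^ α₁ + x₂ ^ α₂ + x₃ ^ α₃) ^ 2)) = ⊤ := by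
  refine top_unique ?_
  calc ⊤ = ∫⁻ x₁ in Ici (2 : ℝ), ENNReal.ofReal (1 / 36) * ENNReal.ofReal x₁⁻¹ := by
        rw [lintegral_const_mul' _ _ ENNReal.ofReal_ne_top,
          setLIntegral_Ici_ofReal_inv_eq_top zero_le_two, ENNReal.mul_top (by norm_num)]
    _ ≤ ∫⁻ x₁ in Ici (2 : ℝ), ∫⁻ x₂ in Ici (1 : ℝ), ∫⁻ x₃ in Ici (1 : ℝ),
          ENNReal.ofReal (1 / (x₁ ^ α₁ + x₂ ^ α₂ + x₃ ^ α₃) ^ 2) :=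
        setLIntegral_mono' measurableSet_Ici fun x hx ↦ ofReal_inv_le_lintegral h3 h32 h21 hγ hx
    _ ≤ _ := lintegral_mono_set (Ici_subset_Ici.2 one_le_two)

theorem stmt9 (α₁ α₂ α₃ : ℝ) (h3 : 0 < α₃) (h32 : α₃ ≤ α₂) (h21 : α₂ ≤ α₁) (h12 : α₁ ≤ 2)
    (hγ : 2 - 1 / α₁ - 1 / α₂ - 1 / α₃ ≤ 0) :
    (∫⁻ x₁ in Ici (1 : ℝ), ∫⁻ x₂ in Ici (1 : ℝ), ∫⁻ x₃ in Ici (1 : ℝ),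
        ENNReal.ofReal (1 / (x₁ ^ α₁ + x₂ ^ α₂ + x₃ ^ α₃) ^ 2)) = ⊤ :=
  stmt9_general α₁ α₂ α₃ h3 h32 h21 hγ
end

section
/- Let $2 \geq \alpha_1 \geq \alpha_2 \geq \alpha_3 > 0$ with $\gamma := 2 - 1/\alpha_1 - 1/\alpha_2 - 1/\alpha_3 > 0$, and suppose $\alpha_2 < 2$. Then for all integers $k, n, m \geq 1$ the integral $\int_1^{\infty}\int_1^{\infty}\int_1^{\infty} \frac{dx_1\,dx_2\,dx_3}{(x_1^{\alpha_1} + x_2^{\alpha_2} + x_3^{\alpha_3})\left(x_1^{\alpha_1} + x_2^{\alpha_2} + x_3^{\alpha_3} + k^{\alpha_1} + n^{\alpha_2} + m^{\alpha_3}\right)}$ is bounded above and below by constant multiples (constants depending only on $\alpha_1,\alpha_2,\alpha_3$) of $(k^{\alpha_1} + n^{\alpha_2} + m^{\alpha_3})^{-\gamma}$. -/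
/-!
Put `T = x₁^α₁ + x₂^α₂ + x₃^α₃`, `L = 1/α₁ + 1/α₂ + 1/α₃` and `p = 1/L`. As every `αᵢ ≤ 2`,
`3/2 ≤ L < 2`, so `1/2 < p < 1`. The weights `p/αᵢ` sum to one, hence
`1/(T(T+S)) = ∏ᵢ (T(T+S))^(-p/αᵢ)`, and since `xᵢ^αᵢ ≤ T` and `S ≤ T + S` each factor is at most
`(xᵢ · max(S^(1/αᵢ), xᵢ))^(-p)`. This majorant depends on `xᵢ` alone; it equals
`S^(-p/αᵢ) xᵢ^(-p)` below `S^(1/αᵢ)` and `xᵢ^(-2p)` above, so its integral is a constant times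
`S^((1-2p)/αᵢ)`, and the product of the three is a constant times `S^(L-2)`.

For the lower bound, on the box `∏ᵢ [S^(1/αᵢ), 2 S^(1/αᵢ)]`, of volume `S^L`, every `xᵢ^αᵢ` lies
in `[S, 4S]`, so `T ≤ 12 S`, `T + S ≤ 13 S`, and the integrand is at least `1/(156 S²)`.
-/

open Set MeasureTheory Real
open scoped ENNReal

lemma lintegral_Ioc_zero_rpow {r b : ℝ} (hr : -1 < r) (hb : 0 ≤ b) :
    ∫⁻ x in Ioc 0 b, ENNReal.ofReal (x ^ r) = ENNReal.ofReal (b ^ (r + 1) / (r + 1)) := by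
  have hint : IntegrableOn (fun x : ℝ => x ^ r) (Ioc 0 b) := by
    simpa [hb] using (intervalIntegral.intervalIntegrable_rpow' hr (a := 0) (b := b)).1
  rw [← ofReal_integral_eq_lintegral_ofReal hint
    ((ae_restrict_iff' measurableSet_Ioc).2 (.of_forall fun x hx => rpow_nonneg hx.1.le r)),
    ← intervalIntegral.integral_of_le hb, integral_rpow (Or.inl hr),
    zero_rpow (by linarith), sub_zero]

lemma lintegral_Ioi_rpow {r b : ℝ} (hr : r < -1) (hb : 0 < b) :
    ∫⁻ x in Ioi b, ENNReal.ofReal (x ^ r) = ENNReal.ofReal (-b ^ (r + 1) / (r + 1)) := by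
  rw [← ofReal_integral_eq_lintegral_ofReal (integrableOn_Ioi_rpow_of_lt hr hb)
    ((ae_restrict_iff' measurableSet_Ioi).2
      (.of_forall fun x hx => rpow_nonneg (hb.trans hx).le r)),
    integral_Ioi_rpow_of_lt hr hb]

lemma lintegral_Ioi_zero_mul_max_rpow {b p : ℝ} (hb : 0 < b) (hp : 1 / 2 < p) (hp1 : p < 1) :
    ∫⁻ x in Ioi 0, ENNReal.ofReal ((x * max b x) ^ (-p)) =
      ENNReal.ofReal ((1 / (1 - p) + 1 / (2 * p - 1)) * b ^ (1 - 2 * p)) := by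
  have near : ∫⁻ x in Ioc 0 b, ENNReal.ofReal ((x * max b x) ^ (-p)) =
      ENNReal.ofReal (b ^ (1 - 2 * p) / (1 - p)) := by
    rw [setLIntegral_congr_fun measurableSet_Ioc fun x hx => by
      rw [max_eq_left hx.2, mul_rpow hx.1.le hb.le, ENNReal.ofReal_mul (rpow_nonneg hx.1.le _)],
      lintegral_mul_const' _ _ ENNReal.ofReal_ne_top, lintegral_Ioc_zero_rpow (by linarith) hb.le,
      ← ENNReal.ofReal_mul (div_nonneg (rpow_nonneg hb.le _) (by linarith)), div_mul_eq_mul_div,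
      ← rpow_add hb]
    ring_nf
  have far : ∫⁻ x in Ioi b, ENNReal.ofReal ((x * max b x) ^ (-p)) =
      ENNReal.ofReal (b ^ (1 - 2 * p) / (2 * p - 1)) := by
    rw [setLIntegral_congr_fun measurableSet_Ioi fun x hx => by
      rw [max_eq_right hx.le, mul_rpow (hb.trans hx).le (hb.trans hx).le, ← rpow_add (hb.trans hx)],
      lintegral_Ioi_rpow (by linarith) hb, neg_div, ← div_neg]
    ring_nf
  rw [← Ioc_union_Ioi_eq_Ioi hb.le, lintegral_union measurableSet_Ioi Ioc_disjoint_Ioi_same, near,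
    far, ← ENNReal.ofReal_add (div_nonneg (rpow_nonneg hb.le _) (by linarith))
      (div_nonneg (rpow_nonneg hb.le _) (by linarith))]
  ring_nf

lemma lintegral_lintegral_lintegral_mul {β : Type*} [MeasurableSpace β] {μ ν ρ : Measure β}
    {f g h : β → ℝ≥0∞} (hf : Measurable f) (hg : Measurable g) (hh : Measurable h) :
    ∫⁻ x, ∫⁻ y, ∫⁻ z, f x * g y * h z ∂ρ ∂ν ∂μ =
      (∫⁻ x, f x ∂μ) * (∫⁻ y, g y ∂ν) * ∫⁻ z, h z ∂ρ := by
  simp only [lintegral_const_mul _ hh, lintegral_mul_const _ (hg.const_mul _),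
    lintegral_const_mul _ hg, lintegral_mul_const _ (hf.mul_const _), lintegral_mul_const _ hf]

lemma rpow_neg_le_mul_max_rpow_neg {α x T S p : ℝ} (hα : 0 < α) (hx : 0 < x) (hS : 0 ≤ S)
    (hxT : x ^ α ≤ T) (hp : 0 ≤ p) :
    (T * (T + S)) ^ (-(p / α)) ≤ (x * max (S ^ (1 / α)) x) ^ (-p) := by
  have hT : 0 ≤ T := (rpow_nonneg hx.le α).trans hxT
  have hxT' : x ≤ T ^ (1 / α) := by
    rw [one_div, le_rpow_inv_iff_of_pos hx.le hT hα]; exact hxT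
  have hmax : max (S ^ (1 / α)) x ≤ (T + S) ^ (1 / α) :=
    max_le (rpow_le_rpow hS (by linarith) (by positivity))
      (hxT'.trans (rpow_le_rpow hT (by linarith) (by positivity)))
  calc (T * (T + S)) ^ (-(p / α)) = ((T * (T + S)) ^ (1 / α)) ^ (-p) := by
        rw [← rpow_mul (by positivity)]; ring_nf
    _ ≤ (x * max (S ^ (1 / α)) x) ^ (-p) := by
        refine rpow_le_rpow_of_nonpos (by positivity) ?_ (by linarith)
        rw [mul_rpow hT (by linarith)]
        exact mul_le_mul hxT' hmax (by positivity) (by positivity)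

lemma one_div_mul_le_prod_mul_max_rpow_neg {α₁ α₂ α₃ p S x₁ x₂ x₃ : ℝ} (h₁ : 0 < α₁)
    (h₂ : 0 < α₂) (h₃ : 0 < α₃) (hp : 0 ≤ p) (hw : p / α₁ + p / α₂ + p / α₃ = 1) (hS : 0 ≤ S)
    (hx₁ : 0 < x₁) (hx₂ : 0 < x₂) (hx₃ : 0 < x₃) :
    1 / ((x₁ ^ α₁ + x₂ ^ α₂ + x₃ ^ α₃) * (x₁ ^ α₁ + x₂ ^ α₂ + x₃ ^ α₃ + S)) ≤
      (x₁ * max (S ^ (1 / α₁)) x₁) ^ (-p) * (x₂ * max (S ^ (1 / α₂)) x₂) ^ (-p) *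
        (x₃ * max (S ^ (1 / α₃)) x₃) ^ (-p) := by
  have a₁ := rpow_pos_of_pos hx₁ α₁
  have a₂ := rpow_pos_of_pos hx₂ α₂
  have a₃ := rpow_pos_of_pos hx₃ α₃
  set T := x₁ ^ α₁ + x₂ ^ α₂ + x₃ ^ α₃
  set Q := T * (T + S)
  have hQ : 0 < Q := by positivity
  calc 1 / Q = Q ^ (-(p / α₁)) * Q ^ (-(p / α₂)) * Q ^ (-(p / α₃)) := by
        rw [← rpow_add hQ, ← rpow_add hQ, ← neg_add, ← neg_add, hw, rpow_neg_one, one_div]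
    _ ≤ _ := by
        gcongr ?_ * ?_ * ?_
        · exact rpow_neg_le_mul_max_rpow_neg h₁ hx₁ hS (by linarith) hp
        · exact rpow_neg_le_mul_max_rpow_neg h₂ hx₂ hS (by linarith) hp
        · exact rpow_neg_le_mul_max_rpow_neg h₃ hx₃ hS (by linarith) hp

theorem setLIntegral_one_div_mul_le {α₁ α₂ α₃ p S : ℝ} {s : Set ℝ} (hs : MeasurableSet s)
    (hs0 : s ⊆ Ioi 0) (h₁ : 0 < α₁) (h₂ : 0 < α₂) (h₃ : 0 < α₃) (hp : 1 / 2 < p) (hp1 : p < 1)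
    (hw : p / α₁ + p / α₂ + p / α₃ = 1) (hS : 0 < S) :
    ∫⁻ x₁ in s, ∫⁻ x₂ in s, ∫⁻ x₃ in s,
        ENNReal.ofReal (1 / ((x₁ ^ α₁ + x₂ ^ α₂ + x₃ ^ α₃) * (x₁ ^ α₁ + x₂ ^ α₂ + x₃ ^ α₃ + S))) ≤
      ENNReal.ofReal ((1 / (1 - p) + 1 / (2 * p - 1)) ^ 3 *
        S ^ ((1 - 2 * p) / α₁ + (1 - 2 * p) / α₂ + (1 - 2 * p) / α₃)) := by
  set K := 1 / (1 - p) + 1 / (2 * p - 1)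
  have hK : 0 ≤ K := add_nonneg (one_div_nonneg.2 (by linarith)) (one_div_nonneg.2 (by linarith))
  set g : ℝ → ℝ → ℝ≥0∞ := fun α x => ENNReal.ofReal ((x * max (S ^ (1 / α)) x) ^ (-p))
  have hg : ∀ α, Measurable (g α) := fun α => by fun_prop
  have pointwise : ∀ x₁ ∈ s, ∀ x₂ ∈ s, ∀ x₃ ∈ s,
      ENNReal.ofReal (1 / ((x₁ ^ α₁ + x₂ ^ α₂ + x₃ ^ α₃) * (x₁ ^ α₁ + x₂ ^ α₂ + x₃ ^ α₃ + S))) ≤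
        g α₁ x₁ * g α₂ x₂ * g α₃ x₃ := fun x₁ hx₁ x₂ hx₂ x₃ hx₃ => by
    have hx₁ : 0 < x₁ := hs0 hx₁
    have hx₂ : 0 < x₂ := hs0 hx₂
    have hx₃ : 0 < x₃ := hs0 hx₃
    rw [← ENNReal.ofReal_mul (by positivity), ← ENNReal.ofReal_mul (by positivity)]
    exact ENNReal.ofReal_le_ofReal <| one_div_mul_le_prod_mul_max_rpow_neg h₁ h₂ h₃
      (by linarith) hw hS.le hx₁ hx₂ hx₃
  have coord : ∀ α, 0 < α → ∫⁻ x in s, g α x ≤ ENNReal.ofReal (K * S ^ ((1 - 2 * p) / α)) :=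
    fun α hα => by
      refine (lintegral_mono_set hs0).trans_eq ?_
      rw [lintegral_Ioi_zero_mul_max_rpow (by positivity) hp hp1, ← rpow_mul hS.le,
        one_div_mul_eq_div]
  calc _ ≤ ∫⁻ x₁ in s, ∫⁻ x₂ in s, ∫⁻ x₃ in s, g α₁ x₁ * g α₂ x₂ * g α₃ x₃ :=
        setLIntegral_mono' hs fun x₁ hx₁ => setLIntegral_mono' hs fun x₂ hx₂ =>
          setLIntegral_mono' hs (pointwise x₁ hx₁ x₂ hx₂)
    _ = (∫⁻ x in s, g α₁ x) * (∫⁻ x in s, g α₂ x) * ∫⁻ x in s, g α₃ x :=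
        lintegral_lintegral_lintegral_mul (hg α₁) (hg α₂) (hg α₃)
    _ ≤ ENNReal.ofReal (K * S ^ ((1 - 2 * p) / α₁)) * ENNReal.ofReal (K * S ^ ((1 - 2 * p) / α₂)) *
          ENNReal.ofReal (K * S ^ ((1 - 2 * p) / α₃)) := by
        gcongr <;> exact coord _ ‹_›
    _ = _ := by
        rw [← ENNReal.ofReal_mul (by positivity), ← ENNReal.ofReal_mul (by positivity),
          rpow_add hS, rpow_add hS]
        ring_nf

theorem exists_setLIntegral_one_div_mul_le {α₁ α₂ α₃ : ℝ} {s : Set ℝ} (hs : MeasurableSet s)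
    (hs0 : s ⊆ Ioi 0) (h₁ : 0 < α₁) (h₂ : 0 < α₂) (h₃ : 0 < α₃) (h₁₂ : α₁ ≤ 2) (h₂₂ : α₂ ≤ 2)
    (h₃₂ : α₃ ≤ 2) (hγ : 0 < 2 - 1 / α₁ - 1 / α₂ - 1 / α₃) :
    ∃ C : ℝ, 1 ≤ C ∧ ∀ S : ℝ, 0 < S →
      ∫⁻ x₁ in s, ∫⁻ x₂ in s, ∫⁻ x₃ in s,
          ENNReal.ofReal (1 / ((x₁ ^ α₁ + x₂ ^ α₂ + x₃ ^ α₃) * (x₁ ^ α₁ + x₂ ^ α₂ + x₃ ^ α₃ + S))) ≤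
        ENNReal.ofReal (C * S ^ (-(2 - 1 / α₁ - 1 / α₂ - 1 / α₃))) := by
  have hL : 3 / 2 ≤ 1 / α₁ + 1 / α₂ + 1 / α₃ := by
    have := one_div_le_one_div_of_le h₁ h₁₂
    have := one_div_le_one_div_of_le h₂ h₂₂
    have := one_div_le_one_div_of_le h₃ h₃₂
    linarith
  set p := 1 / (1 / α₁ + 1 / α₂ + 1 / α₃) with hp
  have hp_half : 1 / 2 < p := by rw [hp, div_lt_div_iff₀ two_pos (by linarith)]; linarith
  have hp_one : p < 1 := by rw [hp, div_lt_one (by linarith)]; linarith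
  have hw : p / α₁ + p / α₂ + p / α₃ = 1 := by rw [hp]; field_simp
  have hexp : (1 - 2 * p) / α₁ + (1 - 2 * p) / α₂ + (1 - 2 * p) / α₃ =
      -(2 - 1 / α₁ - 1 / α₂ - 1 / α₃) := by
    rw [hp]; field_simp; ring
  have hK : 1 ≤ 1 / (1 - p) + 1 / (2 * p - 1) := by
    have : 1 ≤ 1 / (1 - p) := by rw [le_div_iff₀ (by linarith)]; linarith
    have : 0 < 1 / (2 * p - 1) := one_div_pos.2 (by linarith)
    linarith
  exact ⟨_, one_le_pow₀ hK, fun S hS =>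
    hexp ▸ setLIntegral_one_div_mul_le hs hs0 h₁ h₂ h₃ hp_half hp_one hw hS⟩

lemma const_mul_measure_le_setLIntegral {β : Type*} [MeasurableSpace β] {μ : Measure β}
    {s t : Set β} {f : β → ℝ≥0∞} {c : ℝ≥0∞} (hs : MeasurableSet s) (hst : s ⊆ t)
    (hc : ∀ x ∈ s, c ≤ f x) : c * μ s ≤ ∫⁻ x in t, f x ∂μ :=
  calc c * μ s = ∫⁻ _ in s, c ∂μ := (setLIntegral_const s c).symm
    _ ≤ ∫⁻ x in s, f x ∂μ := setLIntegral_mono' hs hc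
    _ ≤ ∫⁻ x in t, f x ∂μ := lintegral_mono_set hst

lemma rpow_mem_Icc_of_mem_Icc_rpow {α S x : ℝ} (hα : 0 < α) (hα2 : α ≤ 2) (hS : 0 ≤ S)
    (hx : x ∈ Icc (S ^ (1 / α)) (2 * S ^ (1 / α))) : x ^ α ∈ Icc S (4 * S) := by
  have hb : 0 ≤ S ^ (1 / α) := rpow_nonneg hS _
  have hbα : (S ^ (1 / α)) ^ α = S := by
    rw [← rpow_mul hS, one_div_mul_cancel hα.ne', rpow_one]
  have h2α : (2 : ℝ) ^ α ≤ 4 := by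
    calc (2 : ℝ) ^ α ≤ 2 ^ (2 : ℝ) := rpow_le_rpow_of_exponent_le (by norm_num) hα2
      _ = 4 := by norm_num
  constructor
  · calc S = (S ^ (1 / α)) ^ α := hbα.symm
      _ ≤ x ^ α := rpow_le_rpow hb hx.1 hα.le
  · calc x ^ α ≤ (2 * S ^ (1 / α)) ^ α := rpow_le_rpow (hb.trans hx.1) hx.2 hα.le
      _ = 2 ^ α * S := by rw [mul_rpow zero_le_two hb, hbα]
      _ ≤ 4 * S := by gcongr

theorem ofReal_le_setLIntegral_Ici_one_div_mul {α₁ α₂ α₃ S : ℝ} (h₁ : 0 < α₁) (h₂ : 0 < α₂)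
    (h₃ : 0 < α₃) (h₁₂ : α₁ ≤ 2) (h₂₂ : α₂ ≤ 2) (h₃₂ : α₃ ≤ 2) (hS : 1 ≤ S) :
    ENNReal.ofReal (1 / 156 * S ^ (-(2 - 1 / α₁ - 1 / α₂ - 1 / α₃))) ≤
      ∫⁻ x₁ in Ici (1 : ℝ), ∫⁻ x₂ in Ici (1 : ℝ), ∫⁻ x₃ in Ici (1 : ℝ),
        ENNReal.ofReal
          (1 / ((x₁ ^ α₁ + x₂ ^ α₂ + x₃ ^ α₃) * (x₁ ^ α₁ + x₂ ^ α₂ + x₃ ^ α₃ + S))) := by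
  have hS0 : 0 < S := by linarith
  have box_sub : ∀ α : ℝ, 0 < α → Icc (S ^ (1 / α)) (2 * S ^ (1 / α)) ⊆ Ici 1 := fun α hα x hx =>
    (one_le_rpow hS (one_div_pos.2 hα).le).trans hx.1
  have hbox : ∀ x₁ ∈ Icc (S ^ (1 / α₁)) (2 * S ^ (1 / α₁)),
      ∀ x₂ ∈ Icc (S ^ (1 / α₂)) (2 * S ^ (1 / α₂)), ∀ x₃ ∈ Icc (S ^ (1 / α₃)) (2 * S ^ (1 / α₃)),
      ENNReal.ofReal (1 / (12 * S * (13 * S))) ≤ ENNReal.ofReal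
        (1 / ((x₁ ^ α₁ + x₂ ^ α₂ + x₃ ^ α₃) * (x₁ ^ α₁ + x₂ ^ α₂ + x₃ ^ α₃ + S))) := by
    intro x₁ hx₁ x₂ hx₂ x₃ hx₃
    obtain ⟨l₁, u₁⟩ := rpow_mem_Icc_of_mem_Icc_rpow h₁ h₁₂ hS0.le hx₁
    obtain ⟨l₂, u₂⟩ := rpow_mem_Icc_of_mem_Icc_rpow h₂ h₂₂ hS0.le hx₂
    obtain ⟨l₃, u₃⟩ := rpow_mem_Icc_of_mem_Icc_rpow h₃ h₃₂ hS0.le hx₃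
    refine ENNReal.ofReal_le_ofReal <|
      one_div_le_one_div_of_le (mul_pos (by linarith) (by linarith)) ?_
    exact mul_le_mul (by linarith) (by linarith) (by linarith) (by positivity)
  have hvol : ∀ b : ℝ, volume (Icc b (2 * b)) = ENNReal.ofReal b := fun b => by
    rw [volume_Icc]; ring_nf
  refine le_of_eq_of_le ?_ <|
    const_mul_measure_le_setLIntegral measurableSet_Icc (box_sub α₁ h₁) fun x₁ hx₁ =>
      const_mul_measure_le_setLIntegral measurableSet_Icc (box_sub α₂ h₂) fun x₂ hx₂ =>
        const_mul_measure_le_setLIntegral measurableSet_Icc (box_sub α₃ h₃) (hbox x₁ hx₁ x₂ hx₂)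
  simp only [hvol]
  rw [← ENNReal.ofReal_mul (by positivity), ← ENNReal.ofReal_mul (by positivity),
    ← ENNReal.ofReal_mul (by positivity)]
  congr 1
  rw [show -(2 - 1 / α₁ - 1 / α₂ - 1 / α₃) = 1 / α₃ + 1 / α₂ + 1 / α₁ - 2 by ring,
    rpow_sub hS0, rpow_add hS0, rpow_add hS0, rpow_two]
  field_simp
  ring

theorem stmt11_general (α₁ α₂ α₃ : ℝ) (h3 : 0 < α₃) (h32 : α₃ ≤ α₂) (h21 : α₂ ≤ α₁) (h12 : α₁ ≤ 2)
    (hγ : 0 < 2 - 1 / α₁ - 1 / α₂ - 1 / α₃) :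
    ∃ c C : ℝ, 0 < c ∧ c ≤ C ∧ ∀ k n m : ℕ, 1 ≤ k → 1 ≤ n → 1 ≤ m →
      ENNReal.ofReal (c * ((k : ℝ) ^ α₁ + (n : ℝ) ^ α₂ + (m : ℝ) ^ α₃)
          ^ (-(2 - 1 / α₁ - 1 / α₂ - 1 / α₃))) ≤
        (∫⁻ x₁ in Ici (1 : ℝ), ∫⁻ x₂ in Ici (1 : ℝ), ∫⁻ x₃ in Ici (1 : ℝ),
          ENNReal.ofReal (1 / ((x₁ ^ α₁ + x₂ ^ α₂ + x₃ ^ α₃) *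
            (x₁ ^ α₁ + x₂ ^ α₂ + x₃ ^ α₃ + (k : ℝ) ^ α₁ + (n : ℝ) ^ α₂ + (m : ℝ) ^ α₃)))) ∧
      (∫⁻ x₁ in Ici (1 : ℝ), ∫⁻ x₂ in Ici (1 : ℝ), ∫⁻ x₃ in Ici (1 : ℝ),
          ENNReal.ofReal (1 / ((x₁ ^ α₁ + x₂ ^ α₂ + x₃ ^ α₃) *
            (x₁ ^ α₁ + x₂ ^ α₂ + x₃ ^ α₃ + (k : ℝ) ^ α₁ + (n : ℝ) ^ α₂ + (m : ℝ) ^ α₃)))) ≤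
        ENNReal.ofReal (C * ((k : ℝ) ^ α₁ + (n : ℝ) ^ α₂ + (m : ℝ) ^ α₃)
          ^ (-(2 - 1 / α₁ - 1 / α₂ - 1 / α₃))) := by
  have h2 : 0 < α₂ := h3.trans_le h32
  have h1 : 0 < α₁ := h2.trans_le h21
  have h22 : α₂ ≤ 2 := h21.trans h12
  have h32' : α₃ ≤ 2 := h32.trans h22
  obtain ⟨C, hC, hupper⟩ := exists_setLIntegral_one_div_mul_le measurableSet_Ici
    (Ici_subset_Ioi.2 one_pos) h1 h2 h3 h12 h22 h32' hγ
  refine ⟨1 / 156, C, by norm_num, by linarith, fun k n m hk hn hm => ?_⟩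
  set S := (k : ℝ) ^ α₁ + (n : ℝ) ^ α₂ + (m : ℝ) ^ α₃
  have hS : 1 ≤ S := by
    have := one_le_rpow (Nat.one_le_cast.2 hk) h1.le
    have := one_le_rpow (Nat.one_le_cast.2 hn) h2.le
    have := one_le_rpow (Nat.one_le_cast.2 hm) h3.le
    linarith
  have hsum : ∀ t : ℝ, t + (k : ℝ) ^ α₁ + (n : ℝ) ^ α₂ + (m : ℝ) ^ α₃ = t + S := fun t => by ring
  simp only [hsum]
  exact ⟨ofReal_le_setLIntegral_Ici_one_div_mul h1 h2 h3 h12 h22 h32' hS,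
    hupper S (by linarith)⟩

theorem stmt11 (α₁ α₂ α₃ : ℝ) (h3 : 0 < α₃) (h32 : α₃ ≤ α₂) (h21 : α₂ ≤ α₁) (h12 : α₁ ≤ 2)
    (h2lt : α₂ < 2) (hγ : 0 < 2 - 1 / α₁ - 1 / α₂ - 1 / α₃) :
    ∃ c C : ℝ, 0 < c ∧ c ≤ C ∧ ∀ k n m : ℕ, 1 ≤ k → 1 ≤ n → 1 ≤ m →
      ENNReal.ofReal (c * ((k : ℝ) ^ α₁ + (n : ℝ) ^ α₂ + (m : ℝ) ^ α₃)
          ^ (-(2 - 1 / α₁ - 1 / α₂ - 1 / α₃))) ≤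
        (∫⁻ x₁ in Ici (1 : ℝ), ∫⁻ x₂ in Ici (1 : ℝ), ∫⁻ x₃ in Ici (1 : ℝ),
          ENNReal.ofReal (1 / ((x₁ ^ α₁ + x₂ ^ α₂ + x₃ ^ α₃) *
            (x₁ ^ α₁ + x₂ ^ α₂ + x₃ ^ α₃ + (k : ℝ) ^ α₁ + (n : ℝ) ^ α₂ + (m : ℝ) ^ α₃)))) ∧
      (∫⁻ x₁ in Ici (1 : ℝ), ∫⁻ x₂ in Ici (1 : ℝ), ∫⁻ x₃ in Ici (1 : ℝ),
          ENNReal.ofReal (1 / ((x₁ ^ α₁ + x₂ ^ α₂ + x₃ ^ α₃) *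
            (x₁ ^ α₁ + x₂ ^ α₂ + x₃ ^ α₃ + (k : ℝ) ^ α₁ + (n : ℝ) ^ α₂ + (m : ℝ) ^ α₃)))) ≤
        ENNReal.ofReal (C * ((k : ℝ) ^ α₁ + (n : ℝ) ^ α₂ + (m : ℝ) ^ α₃)
          ^ (-(2 - 1 / α₁ - 1 / α₂ - 1 / α₃))) :=
  stmt11_general α₁ α₂ α₃ h3 h32 h21 h12 hγ
end

section
/- Let $2 \geq \alpha_1 \geq \alpha_2 > 0$ with $\gamma := 2 - 1/\alpha_1 - 1/\alpha_2 > 0$, $\alpha_2 < 2$, and $\alpha_1 > 1$. Then for all integers $k, n \geq 3$, the integral $\int_1^{n-1}\int_1^{k-1} \frac{dy_1\, dy_2}{\left((k-y_1)^{\alpha_1} + (n-y_2)^{\alpha_2}\right)\left(y_1^{\alpha_1} + y_2^{\alpha_2}\right)}$ is at most $C\left(\frac{1}{k^{\alpha_1} + n^{\alpha_2}}\right)^{\gamma}$, where $C$ depends only on $\alpha_1, \alpha_2$. -/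
/-!
Write `A = (k - y₁)^α₁ + (n - y₂)^α₂` and `B = y₁^α₁ + y₂^α₂`. As `α₁, α₂ ≤ 2`, we have
`(x + y)^α ≤ 4 (x^α + y^α)`, hence `k^α₁ + n^α₂ ≤ 4 (A + B)` and
`1/(AB) ≤ 4/(k^α₁ + n^α₂) · (1/A + 1/B)`; the reflection `(y₁, y₂) ↦ (k - y₁, n - y₂)` turns the
`1/A` term into the `1/B` term. Since `α₁ > 1`, `∫_{y₁ > 0} dy₁ / (y₁^α₁ + y₂^α₂) = O(y₂^β)` with
`β = α₂ (1/α₁ - 1)`, and `β > -1` because `1/α₁ + 1/α₂ > 1`. So the double integral is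
`O(n^(β+1) / (k^α₁ + n^α₂))`, where `n^(β+1) = (n^α₂)^(1/α₁ + 1/α₂ - 1)` is at most
`(k^α₁ + n^α₂)^(1/α₁ + 1/α₂ - 1)`.
-/

open Set MeasureTheory Real

open scoped ENNReal

theorem Real.add_rpow_le_two_rpow_mul_rpow_add_rpow {x y p : ℝ} (hx : 0 ≤ x) (hy : 0 ≤ y)
    (hp : 0 ≤ p) : (x + y) ^ p ≤ 2 ^ p * (x ^ p + y ^ p) := calc
  (x + y) ^ p ≤ (2 * max x y) ^ p := by
    rw [two_mul]; gcongr
    exacts [le_max_left x y, le_max_right x y]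
  _ = 2 ^ p * max x y ^ p := mul_rpow zero_le_two (le_max_of_le_left hx)
  _ ≤ 2 ^ p * (x ^ p + y ^ p) := by
    gcongr
    rcases max_choice x y with h | h <;> rw [h]
    · exact le_add_of_nonneg_right (rpow_nonneg hy p)
    · exact le_add_of_nonneg_left (rpow_nonneg hx p)

theorem Real.rpow_le_four_mul_rpow_sub_add_rpow {x y p : ℝ} (hy : 0 ≤ y) (hyx : y ≤ x)
    (hp : 0 ≤ p) (hp2 : p ≤ 2) : x ^ p ≤ 4 * ((x - y) ^ p + y ^ p) := calc
  x ^ p = (x - y + y) ^ p := by rw [sub_add_cancel]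
  _ ≤ 2 ^ p * ((x - y) ^ p + y ^ p) :=
    add_rpow_le_two_rpow_mul_rpow_add_rpow (sub_nonneg.2 hyx) hy hp
  _ ≤ 2 ^ (2 : ℝ) * ((x - y) ^ p + y ^ p) := by
    gcongr
    exact one_le_two
  _ = 4 * ((x - y) ^ p + y ^ p) := by norm_num

theorem setLIntegral_Icc_comp_sub_left (f : ℝ → ℝ≥0∞) (a b c : ℝ) :
    ∫⁻ x in Icc b c, f (a - x) = ∫⁻ x in Icc (a - c) (a - b), f x := by
  rw [← (Measure.measurePreserving_sub_left volume a).setLIntegral_comp_preimage_emb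
    (MeasurableEquiv.subLeft a).measurableEmbedding f (Icc (a - c) (a - b)), preimage_const_sub_Icc,
    sub_sub_cancel, sub_sub_cancel]

theorem setLIntegral_Icc_add_comp_sub_left {g : ℝ → ℝ≥0∞} (hg : Measurable g) (a b : ℝ) :
    ∫⁻ x in Icc b (a - b), (g (a - x) + g x) = 2 * ∫⁻ x in Icc b (a - b), g x := by
  rw [lintegral_add_right _ hg, setLIntegral_Icc_comp_sub_left, sub_sub_cancel, two_mul]

theorem lintegral_Ioc_rpow {β b : ℝ} (hβ : -1 < β) (hb : 0 ≤ b) :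
    ∫⁻ y in Ioc 0 b, ENNReal.ofReal (y ^ β) = ENNReal.ofReal (b ^ (β + 1) / (β + 1)) := by
  have hint : IntegrableOn (fun y : ℝ ↦ y ^ β) (Ioc 0 b) :=
    (intervalIntegrable_iff_integrableOn_Ioc_of_le hb).mp
      (intervalIntegral.intervalIntegrable_rpow' hβ)
  rw [← ofReal_integral_eq_lintegral_ofReal hint
    ((ae_restrict_iff' measurableSet_Ioc).2 (.of_forall fun y hy ↦ rpow_nonneg hy.1.le β)),
    ← intervalIntegral.integral_of_le hb, integral_rpow (.inl hβ), zero_rpow (by linarith),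
    sub_zero]

theorem lintegral_Ioi_one_div_rpow_add_le {α c : ℝ} (hα : 1 < α) (hc : 0 < c) :
    ∫⁻ y in Ioi 0, ENNReal.ofReal (1 / (y ^ α + c)) ≤
      ENNReal.ofReal (α / (α - 1) * c ^ (1 / α - 1)) := by
  -- below `T = c ^ (1/α)` bound the integrand by `1/c`, above it by `y ^ (-α)`
  set T := c ^ (1 / α)
  have hT : 0 < T := rpow_pos_of_pos hc _
  have hTα : T ^ (1 - α) = c ^ (1 / α - 1) := by
    rw [← rpow_mul hc.le]; congr 1; field_simp
  have head : ∫⁻ y in Ioc 0 T, ENNReal.ofReal (1 / (y ^ α + c)) ≤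
      ENNReal.ofReal (c ^ (1 / α - 1)) := calc
    _ ≤ ∫⁻ _ in Ioc 0 T, ENNReal.ofReal (1 / c) := by
      refine setLIntegral_mono' measurableSet_Ioc fun y hy ↦ ENNReal.ofReal_le_ofReal ?_
      gcongr
      exact le_add_of_nonneg_left (rpow_nonneg hy.1.le α)
    _ = ENNReal.ofReal (c ^ (1 / α - 1)) := by
      rw [setLIntegral_const, volume_Ioc, sub_zero, ← ENNReal.ofReal_mul (by positivity),
        rpow_sub hc, rpow_one, div_mul_eq_mul_div, one_mul]
  have tail : ∫⁻ y in Ioi T, ENNReal.ofReal (1 / (y ^ α + c)) ≤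
      ENNReal.ofReal (c ^ (1 / α - 1) / (α - 1)) := calc
    _ ≤ ∫⁻ y in Ioi T, ENNReal.ofReal (y ^ (-α)) := by
      refine setLIntegral_mono' measurableSet_Ioi fun y hy ↦ ENNReal.ofReal_le_ofReal ?_
      have hy0 : 0 < y := hT.trans hy
      rw [rpow_neg hy0.le, ← one_div]
      gcongr
      exact le_add_of_nonneg_right hc.le
    _ = ENNReal.ofReal (c ^ (1 / α - 1) / (α - 1)) := by
      rw [← ofReal_integral_eq_lintegral_ofReal (integrableOn_Ioi_rpow_of_lt (by linarith) hT)
        ((ae_restrict_iff' measurableSet_Ioi).2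
          (.of_forall fun y hy ↦ rpow_nonneg (hT.trans hy).le _)),
        integral_Ioi_rpow_of_lt (by linarith) hT, show -α + 1 = 1 - α by ring, hTα]
      congr 1
      rw [neg_div, ← div_neg, neg_sub]
  rw [← Ioc_union_Ioi_eq_Ioi hT.le, lintegral_union measurableSet_Ioi Ioc_disjoint_Ioi_same]
  calc _ ≤ ENNReal.ofReal (c ^ (1 / α - 1)) + ENNReal.ofReal (c ^ (1 / α - 1) / (α - 1)) :=
        add_le_add head tail
    _ = _ := by
      have : 0 < α - 1 := by linarith
      rw [← ENNReal.ofReal_add (by positivity) (by positivity)]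
      congr 1
      field_simp
      ring

theorem lintegral_Icc_rpow_sub_add_rpow_le {β N : ℝ} (hβ : -1 < β) (hN : 0 ≤ N) :
    ∫⁻ y in Icc 1 (N - 1), (ENNReal.ofReal ((N - y) ^ β) + ENNReal.ofReal (y ^ β)) ≤
      2 * ENNReal.ofReal (N ^ (β + 1) / (β + 1)) := by
  rw [setLIntegral_Icc_add_comp_sub_left (g := fun y ↦ ENNReal.ofReal (y ^ β)) (by fun_prop),
    ← lintegral_Ioc_rpow hβ hN]
  gcongr
  exact fun y hy ↦ ⟨zero_lt_one.trans_le hy.1, by linarith [hy.2]⟩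

theorem rpow_div_le_one_div_rpow_sub {M D e : ℝ} (hM : 0 ≤ M) (hMD : M ≤ D) (hD : 0 < D)
    (he : 0 ≤ e) : M ^ e / D ≤ (1 / D) ^ (1 - e) := calc
  M ^ e / D ≤ D ^ e / D := by gcongr
  _ = (1 / D) ^ (1 - e) := by
    rw [← rpow_sub_one hD.ne', one_div, inv_rpow hD.le, ← rpow_neg hD.le, neg_sub]

section Kernel

variable {α₁ α₂ : ℝ}

theorem ofReal_one_div_mul_le_four_div_mul_add (h1 : 0 ≤ α₁) (h12 : α₁ ≤ 2) (h2 : 0 ≤ α₂)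
    (h22 : α₂ ≤ 2) {K N y₁ y₂ : ℝ} (hy₁ : y₁ ∈ Ioo 0 K) (hy₂ : y₂ ∈ Ioo 0 N) :
    ENNReal.ofReal (1 / (((K - y₁) ^ α₁ + (N - y₂) ^ α₂) * (y₁ ^ α₁ + y₂ ^ α₂))) ≤
      ENNReal.ofReal (4 / (K ^ α₁ + N ^ α₂)) *
        (ENNReal.ofReal (1 / ((K - y₁) ^ α₁ + (N - y₂) ^ α₂)) +
          ENNReal.ofReal (1 / (y₁ ^ α₁ + y₂ ^ α₂))) := by
  obtain ⟨hy₁, hy₁K⟩ := hy₁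
  obtain ⟨hy₂, hy₂N⟩ := hy₂
  have hK : 0 < K - y₁ := sub_pos.2 hy₁K
  have hN : 0 < N - y₂ := sub_pos.2 hy₂N
  set A := (K - y₁) ^ α₁ + (N - y₂) ^ α₂
  set B := y₁ ^ α₁ + y₂ ^ α₂
  have hA : 0 < A := by positivity
  have hB : 0 < B := by positivity
  have hsum : K ^ α₁ + N ^ α₂ ≤ 4 * (A + B) := by
    have := rpow_le_four_mul_rpow_sub_add_rpow hy₁.le hy₁K.le h1 h12
    have := rpow_le_four_mul_rpow_sub_add_rpow hy₂.le hy₂N.le h2 h22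
    linarith
  have hD0 : 0 < K ^ α₁ + N ^ α₂ := by
    have := hy₁.trans hy₁K
    have := hy₂.trans hy₂N
    positivity
  have key : 1 / (A * B) ≤ 4 / (K ^ α₁ + N ^ α₂) * (1 / A + 1 / B) := by
    rw [show 4 / (K ^ α₁ + N ^ α₂) * (1 / A + 1 / B) = 4 * (A + B) / (K ^ α₁ + N ^ α₂) / (A * B)
      by field_simp; ring]
    gcongr
    rwa [one_le_div hD0]
  rw [← ENNReal.ofReal_add (by positivity) (by positivity), ← ENNReal.ofReal_mul (by positivity)]
  exact ENNReal.ofReal_le_ofReal key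

theorem lintegral_Icc_one_div_rpow_add_rpow_le (h1 : 1 < α₁) (K : ℝ) {t : ℝ} (ht : 0 < t) :
    ∫⁻ y in Icc 1 (K - 1), ENNReal.ofReal (1 / (y ^ α₁ + t ^ α₂)) ≤
      ENNReal.ofReal (α₁ / (α₁ - 1) * t ^ (α₂ * (1 / α₁ - 1))) := by
  rw [rpow_mul ht.le]
  exact (lintegral_mono_set fun y hy ↦ mem_Ioi.2 (zero_lt_one.trans_le hy.1)).trans
    (lintegral_Ioi_one_div_rpow_add_le h1 (rpow_pos_of_pos ht _))

theorem lintegral_Icc_kernel_le (h1 : 1 < α₁) (h12 : α₁ ≤ 2) (h2 : 0 ≤ α₂) (h22 : α₂ ≤ 2)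
    (K : ℝ) {N y₂ : ℝ} (hy₂ : y₂ ∈ Ioo 0 N) :
    ∫⁻ y₁ in Icc 1 (K - 1),
        ENNReal.ofReal (1 / (((K - y₁) ^ α₁ + (N - y₂) ^ α₂) * (y₁ ^ α₁ + y₂ ^ α₂))) ≤
      ENNReal.ofReal (4 * (α₁ / (α₁ - 1)) / (K ^ α₁ + N ^ α₂)) *
        (ENNReal.ofReal ((N - y₂) ^ (α₂ * (1 / α₁ - 1))) +
          ENNReal.ofReal (y₂ ^ (α₂ * (1 / α₁ - 1)))) := by
  have hC : 0 ≤ α₁ / (α₁ - 1) := div_nonneg (by linarith) (by linarith)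
  calc _ ≤ ∫⁻ y₁ in Icc 1 (K - 1), ENNReal.ofReal (4 / (K ^ α₁ + N ^ α₂)) *
          (ENNReal.ofReal (1 / ((K - y₁) ^ α₁ + (N - y₂) ^ α₂)) +
            ENNReal.ofReal (1 / (y₁ ^ α₁ + y₂ ^ α₂))) :=
        setLIntegral_mono' measurableSet_Icc fun y₁ hy₁ ↦ ofReal_one_div_mul_le_four_div_mul_add
          (by linarith) h12 h2 h22 ⟨by linarith [hy₁.1], by linarith [hy₁.2]⟩ hy₂
    _ = ENNReal.ofReal (4 / (K ^ α₁ + N ^ α₂)) *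
          ((∫⁻ y₁ in Icc 1 (K - 1), ENNReal.ofReal (1 / (y₁ ^ α₁ + (N - y₂) ^ α₂))) +
            ∫⁻ y₁ in Icc 1 (K - 1), ENNReal.ofReal (1 / (y₁ ^ α₁ + y₂ ^ α₂))) := by
      have reflect := setLIntegral_Icc_comp_sub_left
        (fun y ↦ ENNReal.ofReal (1 / (y ^ α₁ + (N - y₂) ^ α₂))) K 1 (K - 1)
      rw [sub_sub_cancel] at reflect
      rw [lintegral_const_mul' _ _ ENNReal.ofReal_ne_top, lintegral_add_right _ (by fun_prop),
        reflect]
    _ ≤ ENNReal.ofReal (4 / (K ^ α₁ + N ^ α₂)) *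
          (ENNReal.ofReal (α₁ / (α₁ - 1) * (N - y₂) ^ (α₂ * (1 / α₁ - 1))) +
            ENNReal.ofReal (α₁ / (α₁ - 1) * y₂ ^ (α₂ * (1 / α₁ - 1)))) := by
      gcongr
      exacts [lintegral_Icc_one_div_rpow_add_rpow_le h1 K (sub_pos.2 hy₂.2),
        lintegral_Icc_one_div_rpow_add_rpow_le h1 K hy₂.1]
    _ = _ := by
      rw [ENNReal.ofReal_mul hC, ENNReal.ofReal_mul hC, ← mul_add, ← mul_assoc,
        ← ENNReal.ofReal_mul' hC, div_mul_eq_mul_div]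

theorem lintegral_kernel_le (h1 : 1 < α₁) (h12 : α₁ ≤ 2) (h2 : 0 < α₂) (h22 : α₂ ≤ 2)
    (hs : 1 < 1 / α₁ + 1 / α₂) {K N : ℝ} (hK : 0 ≤ K) (hN : 0 < N) :
    ∫⁻ y₂ in Icc 1 (N - 1), ∫⁻ y₁ in Icc 1 (K - 1),
        ENNReal.ofReal (1 / (((K - y₁) ^ α₁ + (N - y₂) ^ α₂) * (y₁ ^ α₁ + y₂ ^ α₂))) ≤
      ENNReal.ofReal (8 * (α₁ / (α₁ - 1)) / (α₂ * (1 / α₁ + 1 / α₂ - 1)) *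
        (1 / (K ^ α₁ + N ^ α₂)) ^ (2 - 1 / α₁ - 1 / α₂)) := by
  set D := K ^ α₁ + N ^ α₂
  set e := 1 / α₁ + 1 / α₂ - 1
  set β := α₂ * (1 / α₁ - 1)
  have hβ : β + 1 = α₂ * e := by simp only [β, e]; field_simp; ring
  have he : 0 < α₂ * e := mul_pos h2 (by linarith)
  have hC : 0 < α₁ / (α₁ - 1) := div_pos (by linarith) (by linarith)
  have hD : 0 < D := by positivity
  calc _ ≤ ∫⁻ y₂ in Icc 1 (N - 1), ENNReal.ofReal (4 * (α₁ / (α₁ - 1)) / D) *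
          (ENNReal.ofReal ((N - y₂) ^ β) + ENNReal.ofReal (y₂ ^ β)) :=
        setLIntegral_mono' measurableSet_Icc fun y₂ hy₂ ↦ lintegral_Icc_kernel_le h1 h12 h2.le h22
          K ⟨by linarith [hy₂.1], by linarith [hy₂.2]⟩
    _ ≤ ENNReal.ofReal (4 * (α₁ / (α₁ - 1)) / D) *
          (2 * ENNReal.ofReal (N ^ (β + 1) / (β + 1))) := by
      rw [lintegral_const_mul' _ _ ENNReal.ofReal_ne_top]
      gcongr
      exact lintegral_Icc_rpow_sub_add_rpow_le (by linarith) hN.le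
    _ = ENNReal.ofReal (8 * (α₁ / (α₁ - 1)) / (α₂ * e) * ((N ^ α₂) ^ e / D)) := by
      rw [hβ, ← rpow_mul hN.le, show (2 : ℝ≥0∞) = ENNReal.ofReal 2 by simp,
        ← ENNReal.ofReal_mul zero_le_two, ← ENNReal.ofReal_mul (by positivity)]
      congr 1
      ring
    _ ≤ _ := by
      gcongr
      rw [show 2 - 1 / α₁ - 1 / α₂ = 1 - e by ring]
      exact rpow_div_le_one_div_rpow_sub (by positivity) (le_add_of_nonneg_left (by positivity))
        hD (by linarith)

end Kernel

theorem stmt16_general (α₁ α₂ : ℝ) (h2 : 0 < α₂) (h12 : α₁ ≤ 2) (h2lt : α₂ < 2)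
    (h1gt : 1 < α₁) :
    ∃ C : ℝ, 0 < C ∧ ∀ k n : ℕ, 3 ≤ k → 3 ≤ n →
      (∫⁻ y₂ in Icc (1 : ℝ) ((n : ℝ) - 1), ∫⁻ y₁ in Icc (1 : ℝ) ((k : ℝ) - 1),
          ENNReal.ofReal (1 / ((((k : ℝ) - y₁) ^ α₁ + ((n : ℝ) - y₂) ^ α₂) *
            (y₁ ^ α₁ + y₂ ^ α₂)))) ≤
        ENNReal.ofReal (C * (1 / ((k : ℝ) ^ α₁ + (n : ℝ) ^ α₂)) ^ (2 - 1 / α₁ - 1 / α₂)) := by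
  have hs : 1 < 1 / α₁ + 1 / α₂ := by
    have : 1 / 2 ≤ 1 / α₁ := one_div_le_one_div_of_le (by linarith) h12
    have : 1 / 2 < 1 / α₂ := one_div_lt_one_div_of_lt h2 h2lt
    linarith
  have hC : 0 < 8 * (α₁ / (α₁ - 1)) / (α₂ * (1 / α₁ + 1 / α₂ - 1)) :=
    div_pos (mul_pos (by norm_num) (div_pos (by linarith) (by linarith))) (mul_pos h2 (by linarith))
  exact ⟨_, hC, fun k n _ hn ↦
    lintegral_kernel_le h1gt h12 h2 h2lt.le hs k.cast_nonneg (Nat.cast_pos.2 (by omega))⟩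

theorem stmt16 (α₁ α₂ : ℝ) (h2 : 0 < α₂) (h21 : α₂ ≤ α₁) (h12 : α₁ ≤ 2) (h2lt : α₂ < 2)
    (h1gt : 1 < α₁) (hγ : 0 < 2 - 1 / α₁ - 1 / α₂) :
    ∃ C : ℝ, 0 < C ∧ ∀ k n : ℕ, 3 ≤ k → 3 ≤ n →
      (∫⁻ y₂ in Icc (1 : ℝ) ((n : ℝ) - 1), ∫⁻ y₁ in Icc (1 : ℝ) ((k : ℝ) - 1),
          ENNReal.ofReal (1 / ((((k : ℝ) - y₁) ^ α₁ + ((n : ℝ) - y₂) ^ α₂) *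
            (y₁ ^ α₁ + y₂ ^ α₂)))) ≤
        ENNReal.ofReal (C * (1 / ((k : ℝ) ^ α₁ + (n : ℝ) ^ α₂)) ^ (2 - 1 / α₁ - 1 / α₂)) :=
  stmt16_general α₁ α₂ h2 h12 h2lt h1gt
end
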